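/- arXiv:2503.21568 — 6 statements merged into one kernel-verified Lean document; each statement's English description precedes it below -/
import Mathlib

section
/- For every pair of elements α, β of the algebraic closure with αβ = z and α^r + β^r = −s, and for every 0 ≤ j ≤ r−1, the element ζ^j α + ζ^{−j} β is a root of F. In particular each γ_j = ζ^j α₀ + ζ^{−j} β₀ is a root of F, and if Δ ≠ 0 then F(X) = ∏_{j=0}^{r−1} (X − γ_j). -/
open Polynomial

/-- The polynomial `F(X) = (-z)^((r-1)/2) · X · h(2 - X²/z) + s` over `ℚ`, where
`h` is the minimal polynomial over `ℚ` of `ω = ζ + ζ⁻¹`. -/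
noncomputable def Fpoly (r : ℕ) (z s : ℤ) {K : Type*} [Field K] [CharZero K]
    (ζ : K) : Polynomial ℚ :=
  C (((-z) ^ ((r - 1) / 2) : ℤ) : ℚ) *
    (X * ((minpoly ℚ (ζ + ζ⁻¹)).comp (C 2 - C ((z : ℚ))⁻¹ * X ^ 2))) + C (s : ℚ)

lemma dickson_one_one_natDegree_le {R : Type*} [CommRing R] :
    ∀ n : ℕ, (dickson 1 (1:R) n).natDegree ≤ n
  | 0 => by
    rw [dickson_zero]
    exact le_trans (natDegree_sub_le _ _) (by simp)
  | 1 => by simpa using natDegree_X_le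
  | n+2 => by
    rw [dickson_add_two]
    refine le_trans (natDegree_sub_le _ _) (max_le ?_ ?_)
    · exact le_trans (natDegree_mul_le) (by
        have := dickson_one_one_natDegree_le (R := R) (n+1)
        have hX : (X : R[X]).natDegree ≤ 1 := natDegree_X_le
        omega)
    · exact le_trans (natDegree_mul_le) (by
        have := dickson_one_one_natDegree_le (R := R) n
        simp only [natDegree_C, zero_add]
        omega)

/-- A monic polynomial of degree at most `n` with `n` distinct roots is the product of the
corresponding linear factors. -/
lemma prod_eq_of_roots {K : Type*} [Field K] (p : K[X]) (n : ℕ) (f : ℕ → K)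
    (hmon : p.Monic) (hdeg : p.natDegree ≤ n)
    (hroot : ∀ j < n, p.eval (f j) = 0)
    (hinj : ∀ j < n, ∀ k < n, f j = f k → j = k) :
    p = ∏ j ∈ Finset.range n, (X - C (f j)) := by
  classical
  have hp0 : p ≠ 0 := hmon.ne_zero
  have hnodup : ((Multiset.range n).map f).Nodup :=
    (Multiset.nodup_range n).map_on
      (fun x hx y hy h => hinj x (Multiset.mem_range.mp hx) y (Multiset.mem_range.mp hy) h)
  have hs : (Multiset.range n).map f ≤ p.roots := by
    rw [Multiset.le_iff_count]
    intro a
    by_cases ha : a ∈ (Multiset.range n).map f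
    · rw [Multiset.count_eq_one_of_mem hnodup ha]
      obtain ⟨j, hj, rfl⟩ := Multiset.mem_map.mp ha
      exact Multiset.one_le_count_iff_mem.mpr
        ((mem_roots hp0).mpr (hroot j (Multiset.mem_range.mp hj)))
    · rw [Multiset.count_eq_zero_of_notMem ha]; exact Nat.zero_le _
  have hs' : (Multiset.range n).map f = p.roots :=
    Multiset.eq_of_le_of_card_le hs (by simpa using le_trans (p.card_roots') hdeg)
  have hQeq : (∏ j ∈ Finset.range n, (X - C (f j)))
      = ((p.roots).map fun a => X - C a).prod := by
    rw [← hs', Multiset.map_map, Finset.prod_eq_multiset_prod, Finset.range_val]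
    rfl
  have hQmonic : (∏ j ∈ Finset.range n, (X - C (f j))).Monic :=
    monic_prod_of_monic _ _ (fun j _ => monic_X_sub_C _)
  have hQdeg : (∏ j ∈ Finset.range n, (X - C (f j))).natDegree = n := by
    rw [natDegree_prod_of_monic _ _ (fun j _ => monic_X_sub_C _)]
    simp [natDegree_X_sub_C]
  have hdvd : (∏ j ∈ Finset.range n, (X - C (f j))) ∣ p := by
    rw [hQeq]; exact prod_multiset_X_sub_C_dvd p
  exact (eq_of_monic_of_dvd_of_natDegree_le hQmonic hmon hdvd (hdeg.trans hQdeg.ge))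

/-- Proposition (roots of `F`): with `r ≥ 5` prime, `q` an odd prime, `ζ` a primitive
`r`-th root of unity in a fixed algebraic closure `K` of `ℚ_q`, `z ≠ 0` and `s` integers,
`δ` a square root of `Δ = s² - 4z^r`, and `α₀, β₀ ∈ K` with `α₀^r = -(s+δ)/2`,
`β₀^r = -(s-δ)/2`, `α₀β₀ = z`:  every `ζ^j α + ζ^{-j} β` with `αβ = z`, `α^r + β^r = -s`
is a root of `F`; in particular each `γ_j = ζ^j α₀ + ζ^{-j} β₀` is a root of `F`; and if
`Δ ≠ 0` then `F(X) = ∏_{j=0}^{r-1} (X - γ_j)`. -/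
theorem stmt_1 (r q : ℕ) [Fact q.Prime] (hq2 : q ≠ 2) (hr : r.Prime) (hr5 : 5 ≤ r)
    {K : Type*} [Field K] [CharZero K] [Algebra ℚ_[q] K] [IsAlgClosure ℚ_[q] K]
    (ζ : K) (hζ : IsPrimitiveRoot ζ r)
    (z s : ℤ) (hz : z ≠ 0)
    (δ α₀ β₀ : K) (hδ : δ ^ 2 = ((s ^ 2 - 4 * z ^ r : ℤ) : K))
    (hα : α₀ ^ r = -(((s : K) + δ) / 2)) (hβ : β₀ ^ r = -(((s : K) - δ) / 2))
    (hαβ : α₀ * β₀ = (z : K)) :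
    (∀ α β : K, α * β = (z : K) → α ^ r + β ^ r = -(s : K) →
      ∀ j : ℕ, j < r → aeval (ζ ^ j * α + ζ⁻¹ ^ j * β) (Fpoly r z s ζ) = 0) ∧
    (∀ j : ℕ, j < r → aeval (ζ ^ j * α₀ + ζ⁻¹ ^ j * β₀) (Fpoly r z s ζ) = 0) ∧
    ((s ^ 2 - 4 * z ^ r : ℤ) ≠ 0 →
      (Fpoly r z s ζ).map (algebraMap ℚ K) =
        ∏ j ∈ Finset.range r, (X - C (ζ ^ j * α₀ + ζ⁻¹ ^ j * β₀))) := by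
  have hr1 : 1 < r := by omega
  set m := (r - 1) / 2 with hmdef
  have hrm : r = 2 * m + 1 := by
    have hodd : Odd r := hr.odd_of_ne_two (by omega)
    obtain ⟨t, ht⟩ := hodd; omega
  have hm2 : 2 ≤ m := by omega
  have hzK : (z : K) ≠ 0 := Int.cast_ne_zero.mpr hz
  have hζ0 : ζ ≠ 0 := hζ.ne_zero (by omega)
  have hζr : ζ ^ r = 1 := hζ.pow_eq_one
  have hinv : ∀ x : K, x ^ r = 1 → x⁻¹ = x ^ (r - 1) := by
    intro x hx
    refine inv_eq_of_mul_eq_one_right ?_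
    rw [← pow_succ']
    have : r - 1 + 1 = r := by omega
    rw [this, hx]
  have hωint : IsIntegral ℚ (ζ + ζ⁻¹) := by
    exact ((hζ.isIntegral (by omega)).tower_top).add ((hζ.inv.isIntegral (by omega)).tower_top)
  set p : ℚ[X] := minpoly ℚ (ζ + ζ⁻¹) with hpdef
  have hpmonic : p.Monic := minpoly.monic hωint
  -- every ω_j is a root of p
  have hroot : ∀ j : ℕ, 1 ≤ j → j < r → (aeval (ζ ^ j + ζ⁻¹ ^ j) p) = 0 := by
    intro j hj1 hjr
    have hcop : Nat.Coprime j r := Nat.Coprime.symm <| (hr.coprime_iff_not_dvd).mpr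
      (fun hdvd => absurd (Nat.le_of_dvd (by omega) hdvd) (by omega))
    have hprim : IsPrimitiveRoot (ζ ^ j) r := hζ.pow_of_coprime j hcop
    set q' : ℚ[X] := p.comp (X + X ^ (r - 1)) with hq'def
    have hq'ζ : aeval ζ q' = 0 := by
      rw [hq'def, aeval_comp]
      have : aeval ζ (X + X ^ (r - 1) : ℚ[X]) = ζ + ζ⁻¹ := by
        rw [map_add, aeval_X, aeval_X_pow, ← hinv ζ hζr]
      rw [this]
      exact minpoly.aeval ℚ _
    have hdvd : minpoly ℚ (ζ ^ j) ∣ q' := by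
      rw [cyclotomic_eq_minpoly_rat hprim (by omega) |>.symm,
        cyclotomic_eq_minpoly_rat hζ (by omega)]
      exact minpoly.dvd ℚ ζ hq'ζ
    have hq'j : aeval (ζ ^ j) q' = 0 := by
      obtain ⟨e, he⟩ := hdvd
      rw [he, map_mul, minpoly.aeval, zero_mul]
    rw [hq'def, aeval_comp] at hq'j
    have hje : (ζ ^ j)⁻¹ = (ζ ^ j) ^ (r - 1) := hinv _ hprim.pow_eq_one
    have : aeval (ζ ^ j) (X + X ^ (r - 1) : ℚ[X]) = ζ ^ j + ζ⁻¹ ^ j := by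
      rw [map_add, aeval_X, aeval_X_pow, ← hje, inv_pow]
    rwa [this] at hq'j
  -- degree bound via Dickson polynomials
  have hdeg : p.natDegree ≤ m := by
    set Q : ℚ[X] := 1 + ∑ k ∈ Finset.range m, dickson 1 1 (k+1) with hQdef
    have hQdeg : Q.natDegree ≤ m := by
      refine le_trans (natDegree_add_le _ _) (max_le (by simp) ?_)
      refine natDegree_sum_le_of_forall_le _ _ (fun k hk => ?_)
      have := dickson_one_one_natDegree_le (R := ℚ) (k+1)
      have := Finset.mem_range.mp hk
      omega
    have hQne : Q ≠ 0 := by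
      have hpos : 0 < Q.eval (2 + 2⁻¹ : ℚ) := by
        rw [hQdef]
        rw [eval_add, eval_one, eval_finset_sum]
        have : ∀ k ∈ Finset.range m, (dickson 1 (1:ℚ) (k+1)).eval (2 + 2⁻¹)
            = 2^(k+1) + 2⁻¹^(k+1) := fun k _ =>
          dickson_one_one_eval_add_inv 2 2⁻¹ (by norm_num) (k+1)
        rw [Finset.sum_congr rfl this]
        have hnn : 0 ≤ ∑ k ∈ Finset.range m, ((2:ℚ)^(k+1) + 2⁻¹^(k+1)) :=
          Finset.sum_nonneg (fun k _ => add_nonneg (pow_nonneg (by norm_num) _)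
            (pow_nonneg (by norm_num) _))
        linarith
      intro h; rw [h] at hpos; simp at hpos
    have hQω : aeval (ζ + ζ⁻¹) Q = 0 := by
      have hev : ∀ k : ℕ, aeval (ζ + ζ⁻¹) (dickson 1 (1:ℚ) k) = ζ ^ k + ζ⁻¹ ^ k := by
        intro k
        rw [aeval_def, eval₂_eq_eval_map, map_dickson]
        have := dickson_one_one_eval_add_inv ζ ζ⁻¹ (mul_inv_cancel₀ hζ0) k
        simpa using this
      rw [hQdef, map_add, map_one, map_sum]
      have h1 : (∑ k ∈ Finset.range m, aeval (ζ + ζ⁻¹) (dickson 1 (1:ℚ) (k+1)))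
          = ∑ k ∈ Finset.range m, (ζ ^ (k+1) + ζ⁻¹ ^ (k+1)) :=
        Finset.sum_congr rfl (fun k _ => hev (k+1))
      rw [h1]
      have hζm : (ζ : K) ^ m ≠ 0 := pow_ne_zero _ hζ0
      have hsplit : ∑ i ∈ Finset.range r, ζ^i
          = (∑ i ∈ Finset.range m, ζ^i + ζ^m) + ∑ k ∈ Finset.range m, ζ^(m+1+k) := by
        have hre : r = (m+1) + m := by omega
        rw [hre, Finset.sum_range_add, Finset.sum_range_succ]
      have hmain : ζ^m * (1 + ∑ k ∈ Finset.range m, (ζ^(k+1) + ζ⁻¹^(k+1)))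
          = ∑ i ∈ Finset.range r, ζ^i := by
        rw [hsplit, mul_add, mul_one, Finset.mul_sum]
        have h2 : ∀ k ∈ Finset.range m,
            ζ^m * (ζ^(k+1) + ζ⁻¹^(k+1)) = ζ^(m+1+k) + ζ^(m-1-k) := by
          intro k hk
          have hk' := Finset.mem_range.mp hk
          have e1 : ζ^m * ζ^(k+1) = ζ^(m+1+k) := by rw [← pow_add]; congr 1; omega
          have e2 : ζ^m * ζ⁻¹^(k+1) = ζ^(m-1-k) := by
            conv_lhs => rw [show m = (m-1-k) + (k+1) by omega]
            rw [pow_add, mul_assoc, ← mul_pow, mul_inv_cancel₀ hζ0, one_pow, mul_one]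
          rw [mul_add, e1, e2]
        rw [Finset.sum_congr rfl h2, Finset.sum_add_distrib]
        have h3 : (∑ k ∈ Finset.range m, ζ^(m-1-k)) = ∑ k ∈ Finset.range m, ζ^k :=
          Finset.sum_range_reflect (fun i => ζ^i) m
        rw [h3]; ring
      have hg : (∑ i ∈ Finset.range r, ζ^i) = 0 := hζ.geom_sum_eq_zero hr1
      have := hmain.trans hg
      rcases mul_eq_zero.mp this with h | h
      · exact absurd h hζm
      · exact h
    exact le_trans (natDegree_le_of_dvd (minpoly.dvd ℚ _ hQω) hQne) hQdeg
  -- the ω_j are pairwise distinct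
  have hdist : ∀ j < m, ∀ k < m,
      (ζ ^ (j+1) + ζ⁻¹ ^ (j+1)) = (ζ ^ (k+1) + ζ⁻¹ ^ (k+1)) → j = k := by
    intro j hj k hk h
    set u := ζ ^ (j+1) with hu
    set v := ζ ^ (k+1) with hv
    have hu0 : u ≠ 0 := pow_ne_zero _ hζ0
    have hv0 : v ≠ 0 := pow_ne_zero _ hζ0
    have h' : u + u⁻¹ = v + v⁻¹ := by rwa [inv_pow, inv_pow] at h
    have hkey : (u - v) * (u * v - 1) = (u + u⁻¹ - (v + v⁻¹)) * (u * v) := by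
      field_simp; ring
    rw [h', sub_self, zero_mul] at hkey
    rcases mul_eq_zero.mp hkey with h1 | h1
    · have : u = v := sub_eq_zero.mp h1
      have := hζ.pow_inj (by omega : j+1 < r) (by omega : k+1 < r) this
      omega
    · exfalso
      have huv : ζ ^ (j+1+(k+1)) = 1 := by
        rw [pow_add]; rw [sub_eq_zero] at h1; exact h1
      have := (hζ.pow_eq_one_iff_dvd _).mp huv
      have := Nat.le_of_dvd (by omega) this
      omega
  -- factorization of p over K
  have hA : p.map (algebraMap ℚ K)
      = ∏ j ∈ Finset.range m, (X - C (ζ ^ (j+1) + ζ⁻¹ ^ (j+1))) := by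
    refine prod_eq_of_roots _ m _ (hpmonic.map _) ?_ ?_ hdist
    · rwa [natDegree_map]
    · intro j hj
      rw [eval_map, ← aeval_def]
      exact hroot (j+1) (by omega) (by omega)
  -- the key evaluation
  have key : ∀ α β : K, α * β = (z : K) → α ^ r + β ^ r = -(s : K) →
      aeval (α + β) (Fpoly r z s ζ) = 0 := by
    intro α β hab hsum
    have hβ0 : β ≠ 0 := fun h => hzK (by rw [← hab, h, mul_zero])
    have hprod : α ^ r + β ^ r = ∏ i ∈ Finset.range r, (α + ζ ^ i * β) := by
      have hodd : Odd r := hr.odd_of_ne_two (by omega)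
      have e : (-β) ^ r = -β ^ r := hodd.neg_pow β
      have hX := X_pow_sub_C_eq_prod hζ (by omega : 0 < r) e
      have := congrArg (eval α) hX
      simpa [eval_prod, sub_neg_eq_add, mul_neg] using this
    rw [Fpoly, ← hmdef, ← hpdef]
    rw [map_add, map_mul, map_mul, aeval_C, aeval_X, aeval_comp]
    set y : K := aeval (α + β) (C 2 - C ((z:ℚ))⁻¹ * X ^ 2 : ℚ[X]) with hy
    have hyval : y = 2 - (z:K)⁻¹ * (α + β)^2 := by
      rw [hy, map_sub, map_mul, aeval_C, map_pow, aeval_X]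
      push_cast
      norm_num [map_ofNat]
    have hpy : aeval y p
        = ∏ j ∈ Finset.range m, (y - (ζ ^ (j+1) + ζ⁻¹ ^ (j+1))) := by
      rw [aeval_def, eval₂_eq_eval_map, hA, eval_prod]
      simp [eval_sub, eval_X, eval_C]
    have hfac : ∀ j ∈ Finset.range m, (y - (ζ ^ (j+1) + ζ⁻¹ ^ (j+1)))
        = -(z:K)⁻¹ * ((α + ζ ^ (j+1) * β) * (α + ζ⁻¹ ^ (j+1) * β)) := by
      intro j hj
      have hc : ζ ^ (j+1) * ζ⁻¹ ^ (j+1) = 1 := by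
        rw [← mul_pow, mul_inv_cancel₀ hζ0, one_pow]
      rw [hyval]
      have hzi : (z:K)⁻¹ * (z:K) = 1 := inv_mul_cancel₀ hzK
      linear_combination ((ζ ^ (j+1) + ζ⁻¹ ^ (j+1)) - 2) * (z:K)⁻¹ * hab
        + ((ζ ^ (j+1) + ζ⁻¹ ^ (j+1)) - 2) * hzi + (z:K)⁻¹ * β ^ 2 * hc
    rw [hpy, Finset.prod_congr rfl hfac, Finset.prod_mul_distrib, Finset.prod_const,
      Finset.prod_mul_distrib]
    have hre : (α + β) * ((∏ j ∈ Finset.range m, (α + ζ ^ (j+1) * β)) *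
        ∏ j ∈ Finset.range m, (α + ζ⁻¹ ^ (j+1) * β))
        = ∏ i ∈ Finset.range r, (α + ζ ^ i * β) := by
      have h0 : ∏ i ∈ Finset.range r, (α + ζ ^ i * β)
          = (∏ i ∈ Finset.range (2*m), (α + ζ ^ (i+1) * β)) * (α + ζ ^ 0 * β) := by
        rw [show r = 2*m + 1 from hrm, Finset.prod_range_succ']
      have h1 : (∏ i ∈ Finset.range (2*m), (α + ζ ^ (i+1) * β))
          = (∏ i ∈ Finset.range m, (α + ζ ^ (i+1) * β)) *
            ∏ i ∈ Finset.range m, (α + ζ ^ (m+i+1) * β) := by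
        rw [show 2*m = m + m by ring, Finset.prod_range_add]
      have h2 : (∏ i ∈ Finset.range m, (α + ζ ^ (m+i+1) * β))
          = ∏ j ∈ Finset.range m, (α + ζ⁻¹ ^ (j+1) * β) := by
        rw [← Finset.prod_range_reflect (fun i => α + ζ ^ (m+i+1) * β) m]
        refine Finset.prod_congr rfl (fun j hj => ?_)
        have hj' := Finset.mem_range.mp hj
        have : ζ ^ (m + (m-1-j) + 1) = ζ⁻¹ ^ (j+1) := by
          rw [inv_pow]
          refine eq_inv_of_mul_eq_one_left ?_
          rw [← pow_add]
          have : m + (m-1-j) + 1 + (j+1) = r := by omega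
          rw [this, hζr]
        rw [this]
      rw [h0, h1, h2]
      simp [pow_zero, one_mul]
      ring
    have hone : (-(z:K))^m * (-(z:K)⁻¹)^m = 1 := by
      rw [← mul_pow, neg_mul_neg, mul_inv_cancel₀ hzK, one_pow]
    rw [aeval_C, Finset.card_range, map_intCast, map_intCast]
    push_cast
    linear_combination ((∏ x ∈ Finset.range m, (α + ζ ^ (x+1) * β)) *
        (∏ x ∈ Finset.range m, (α + ζ⁻¹ ^ (x+1) * β)) * (α + β)) * hone + hre - hprod + hsum
  have part1 : ∀ α β : K, α * β = (z : K) → α ^ r + β ^ r = -(s : K) →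
      ∀ j : ℕ, j < r → aeval (ζ ^ j * α + ζ⁻¹ ^ j * β) (Fpoly r z s ζ) = 0 := by
    intro α β hab hsum j hj
    refine key (ζ ^ j * α) (ζ⁻¹ ^ j * β) ?_ ?_
    · have : ζ ^ j * α * (ζ⁻¹ ^ j * β) = (ζ * ζ⁻¹) ^ j * (α * β) := by
        rw [mul_pow]; ring
      rw [this, mul_inv_cancel₀ hζ0, one_pow, one_mul, hab]
    · have h1 : (ζ ^ j) ^ r = 1 := by rw [← pow_mul, mul_comm, pow_mul, hζr, one_pow]
      have h2 : (ζ⁻¹ ^ j) ^ r = 1 := by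
        rw [← pow_mul, mul_comm, pow_mul, inv_pow, hζr, inv_one, one_pow]
      rw [mul_pow, mul_pow, h1, h2, one_mul, one_mul, hsum]
  have hsum0 : α₀ ^ r + β₀ ^ r = -(s : K) := by rw [hα, hβ]; ring
  have part2 : ∀ j : ℕ, j < r → aeval (ζ ^ j * α₀ + ζ⁻¹ ^ j * β₀) (Fpoly r z s ζ) = 0 :=
    fun j hj => part1 α₀ β₀ hαβ hsum0 j hj
  refine ⟨part1, part2, ?_⟩
  intro hΔ
  -- degree of p is exactly m
  have hpdeg : p.natDegree = m := by
    have h1 : (p.map (algebraMap ℚ K)).natDegree = m := by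
      rw [hA, natDegree_prod_of_monic _ _ (fun j _ => monic_X_sub_C _)]
      simp only [natDegree_X_sub_C, Finset.sum_const, Finset.card_range, smul_eq_mul, mul_one]
    rwa [natDegree_map] at h1
  -- Fpoly is monic of degree r
  have hzQ : ((z:ℚ))⁻¹ ≠ 0 := by
    simp only [ne_eq, inv_eq_zero, Int.cast_eq_zero]; exact hz
  set u : ℚ[X] := C 2 - C ((z : ℚ))⁻¹ * X ^ 2 with hudef
  have hu2 : u = C (-((z:ℚ))⁻¹) * X^2 + C 0 * X + C 2 := by rw [hudef, C_neg, C_0]; ring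
  have hudeg : u.natDegree = 2 := by
    rw [hu2]; exact natDegree_quadratic (by simpa using hz)
  have hulead : u.leadingCoeff = -((z:ℚ))⁻¹ := by
    rw [hu2]; exact leadingCoeff_quadratic (by simpa using hz)
  have hcompdeg : (p.comp u).natDegree = 2*m := by
    rw [natDegree_comp, hpdeg, hudeg]; ring
  have hcomplead : (p.comp u).leadingCoeff = (-((z:ℚ))⁻¹)^m := by
    rw [leadingCoeff_comp (by rw [hudeg]; norm_num), hpmonic.leadingCoeff, one_mul,
      hulead, hpdeg]
  have hcompne : p.comp u ≠ 0 := by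
    intro h
    rw [h, leadingCoeff_zero] at hcomplead
    exact (pow_ne_zero m (neg_ne_zero.mpr hzQ)) hcomplead.symm
  set big : ℚ[X] := C (((-z) ^ m : ℤ) : ℚ) * (X * (p.comp u)) with hbigdef
  have hbiglead : big.leadingCoeff = 1 := by
    rw [hbigdef, leadingCoeff_mul, leadingCoeff_mul, leadingCoeff_C, leadingCoeff_X,
      hcomplead, one_mul]
    push_cast
    rw [← mul_pow, neg_mul_neg, mul_inv_cancel₀ (by exact_mod_cast hz), one_pow]
  have hbigne : big ≠ 0 := by
    intro h; rw [h, leadingCoeff_zero] at hbiglead; norm_num at hbiglead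
  have hbigdeg : big.natDegree = r := by
    rw [hbigdef, natDegree_mul (by
        simp only [ne_eq, C_eq_zero, Int.cast_eq_zero]
        exact pow_ne_zero _ (neg_ne_zero.mpr hz)) (by
        intro h
        rcases mul_eq_zero.mp h with h | h
        · exact X_ne_zero h
        · exact hcompne h),
      natDegree_C, natDegree_mul X_ne_zero hcompne, natDegree_X, hcompdeg]
    omega
  have hFdef : Fpoly r z s ζ = big + C (s:ℚ) := by
    rw [Fpoly, hbigdef, hudef, hpdef, ← hmdef]
  have hFmonic : (Fpoly r z s ζ).Monic := by
    rw [hFdef]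
    refine Monic.add_of_left hbiglead ?_
    refine lt_of_le_of_lt (degree_C_le) ?_
    rw [degree_eq_natDegree hbigne, hbigdeg]
    exact_mod_cast (by omega : (0:ℕ) < r)
  have hFdeg : (Fpoly r z s ζ).natDegree = r := by
    rw [hFdef, natDegree_add_C, hbigdeg]
  -- distinctness of the γ_j
  have hδ0 : δ ≠ 0 := by
    intro h
    rw [h] at hδ
    exact hΔ (by exact_mod_cast ((Int.cast_injective (α := K)) (by simpa using hδ.symm)))
  have hdistγ : ∀ j < r, ∀ k < r,
      (ζ ^ j * α₀ + ζ⁻¹ ^ j * β₀) = (ζ ^ k * α₀ + ζ⁻¹ ^ k * β₀) → j = k := by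
    intro j hj k hk h
    by_contra hne
    have huv : ζ ^ j ≠ ζ ^ k := fun he => hne (hζ.pow_inj hj hk he)
    set a := ζ ^ j with ha
    set b := ζ ^ k with hb
    have ha0 : a ≠ 0 := pow_ne_zero _ hζ0
    have hb0 : b ≠ 0 := pow_ne_zero _ hζ0
    have h' : α₀ * a + β₀ * a⁻¹ = α₀ * b + β₀ * b⁻¹ := by
      rw [inv_pow, inv_pow] at h; rw [mul_comm α₀, mul_comm β₀, mul_comm α₀, mul_comm β₀]
      exact h
    have hkey : (a - b) * (α₀ - β₀ * (a*b)⁻¹) = 0 := by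
      have expand : (a - b) * (α₀ - β₀ * (a*b)⁻¹)
          = (α₀ * a + β₀ * a⁻¹) - (α₀ * b + β₀ * b⁻¹) := by
        field_simp
        ring
      rw [expand, h', sub_self]
    have hab0 : α₀ = β₀ * (a*b)⁻¹ := by
      rcases mul_eq_zero.mp hkey with h1 | h1
      · exact absurd (sub_eq_zero.mp h1) huv
      · exact sub_eq_zero.mp h1
    have habr : (a*b)^r = 1 := by
      rw [ha, hb, ← pow_add, ← pow_mul, mul_comm (j+k), pow_mul, hζr, one_pow]
    have : α₀ ^ r = β₀ ^ r := by
      rw [hab0, mul_pow, inv_pow, habr, inv_one, mul_one]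
    rw [hα, hβ] at this
    apply hδ0
    field_simp at this
    have h2 : (2:K) * δ = 0 := by linear_combination (-1 : K) * this
    rcases mul_eq_zero.mp h2 with h2 | h2
    · exact absurd h2 two_ne_zero
    · exact h2
  refine prod_eq_of_roots _ r _ (hFmonic.map _) (by rw [natDegree_map, hFdeg]) ?_ hdistγ
  intro j hj
  rw [eval_map, ← aeval_def]
  exact part2 j hj
end

section
/- For any 0 ≤ j, k ≤ r−1 one has γ_k − γ_j = ζ^k (1 − ζ^{j−k}) (α₀ − ζ^{−k−j} β₀). Moreover, for any fixed 0 ≤ k ≤ r−1 with α₀ ≠ ζ^{−2k} β₀, one has ∏_{j=0, j≠k}^{r−1} (γ_k − γ_j) = r·(α₀^r − β₀^r) / (ζ^k (α₀ − ζ^{−2k} β₀)) = −r·δ / (ζ^k (α₀ − ζ^{−2k} β₀)). -/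
open Polynomial

private lemma aux_cancel {r a b M : ℕ} (ha : a < r) (hb : b < r)
    (h : (a + M) % r = (b + M) % r) : a = b := by
  have h2 : a ≡ b [MOD r] := Nat.ModEq.add_right_cancel' M h
  rwa [Nat.ModEq, Nat.mod_eq_of_lt ha, Nat.mod_eq_of_lt hb] at h2

/-- Lemma (differences of roots): with `γ_j = ζ^j α₀ + ζ^{-j} β₀` (indices mod `r`,
realized by `ℤ`-exponents), for `0 ≤ j, k ≤ r - 1` one has
`γ_k − γ_j = ζ^k (1 − ζ^{j−k}) (α₀ − ζ^{−k−j} β₀)`, and for fixed `0 ≤ k ≤ r - 1`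
with `α₀ ≠ ζ^{−2k} β₀`,
`∏_{j ≠ k} (γ_k − γ_j) = r (α₀^r − β₀^r) / (ζ^k (α₀ − ζ^{−2k} β₀))
                      = −r δ / (ζ^k (α₀ − ζ^{−2k} β₀))`. -/
theorem stmt_2 (r q : ℕ) [Fact q.Prime] (hq2 : q ≠ 2) (hr : r.Prime) (hr5 : 5 ≤ r)
    {K : Type*} [Field K] [CharZero K] [Algebra ℚ_[q] K] [IsAlgClosure ℚ_[q] K]
    (ζ : K) (hζ : IsPrimitiveRoot ζ r)
    (z s : ℤ) (hz : z ≠ 0)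
    (δ α₀ β₀ : K) (hδ : δ ^ 2 = ((s ^ 2 - 4 * z ^ r : ℤ) : K))
    (hα : α₀ ^ r = -(((s : K) + δ) / 2)) (hβ : β₀ ^ r = -(((s : K) - δ) / 2))
    (hαβ : α₀ * β₀ = (z : K))
    (γ : ℤ → K) (hγ : ∀ j : ℤ, γ j = ζ ^ j * α₀ + ζ ^ (-j) * β₀) :
    (∀ j k : ℕ, j ≤ r - 1 → k ≤ r - 1 →
      γ k - γ j = ζ ^ k * (1 - ζ ^ ((j : ℤ) - (k : ℤ))) *
        (α₀ - ζ ^ (-(k : ℤ) - (j : ℤ)) * β₀)) ∧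
    (∀ k : ℕ, k ≤ r - 1 → α₀ ≠ ζ ^ (-(2 * (k : ℤ))) * β₀ →
      (∏ j ∈ (Finset.range r).erase k, (γ k - γ j))
          = (r : K) * (α₀ ^ r - β₀ ^ r) / (ζ ^ k * (α₀ - ζ ^ (-(2 * (k : ℤ))) * β₀)) ∧
      (∏ j ∈ (Finset.range r).erase k, (γ k - γ j))
          = -((r : K) * δ) / (ζ ^ k * (α₀ - ζ ^ (-(2 * (k : ℤ))) * β₀))) := by
  have hr0 : r ≠ 0 := hr.ne_zero
  have hrpos : 0 < r := hr.pos
  have hζ0 : ζ ≠ 0 := hζ.ne_zero hr0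
  have h1 : ζ ^ r = 1 := hζ.pow_eq_one
  -- exponent congruence helpers
  have hzeq : ∀ a b : ℤ, (r : ℤ) ∣ a - b → ζ ^ a = ζ ^ b := by
    intro a b ⟨c, hc⟩
    have ha : a = b + (r : ℤ) * c := by linarith
    rw [ha, zpow_add₀ hζ0, zpow_mul, zpow_natCast, h1, one_zpow, mul_one]
  have hznz : ∀ (m : ℤ) (n : ℕ), (r : ℤ) ∣ (n : ℤ) - m → ζ ^ m = ζ ^ n := by
    intro m n h
    rw [← zpow_natCast]
    exact (hzeq _ _ h).symm
  -- Part 1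
  have key : ∀ j k : ℤ, γ k - γ j =
      ζ ^ k * (1 - ζ ^ (j - k)) * (α₀ - ζ ^ (-k - j) * β₀) := by
    intro j k
    have hk0 : ζ ^ k ≠ 0 := zpow_ne_zero _ hζ0
    have hj0 : ζ ^ j ≠ 0 := zpow_ne_zero _ hζ0
    have e1 : (-k - j : ℤ) = -(k + j) := by ring
    rw [hγ, hγ, e1, zpow_sub₀ hζ0, zpow_neg, zpow_neg, zpow_neg, zpow_add₀ hζ0]
    field_simp
    ring
  refine ⟨fun j k _ _ => by have := key (j : ℤ) (k : ℤ); rwa [zpow_natCast] at this, ?_⟩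
  intro k hk hne
  have hk' : k < r := by omega
  have hD2 : α₀ - ζ ^ (-(2 * (k : ℤ))) * β₀ ≠ 0 := sub_ne_zero_of_ne hne
  have hD : (ζ : K) ^ k * (α₀ - ζ ^ (-(2 * (k : ℤ))) * β₀) ≠ 0 :=
    mul_ne_zero (pow_ne_zero _ hζ0) hD2
  set S := (Finset.range r).erase k with hS
  -- split the product in three
  have hP : ∏ j ∈ S, (γ k - γ j) =
      (∏ j ∈ S, ζ ^ (k : ℤ)) * ((∏ j ∈ S, (1 - ζ ^ ((j : ℤ) - (k : ℤ)))) *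
        ∏ j ∈ S, (α₀ - ζ ^ (-(k : ℤ) - (j : ℤ)) * β₀)) := by
    rw [← Finset.prod_mul_distrib, ← Finset.prod_mul_distrib]
    exact Finset.prod_congr rfl fun j _ => by rw [key (j : ℤ) (k : ℤ), mul_assoc]
  have hcard : S.card = r - 1 := by
    rw [hS, Finset.card_erase_of_mem (Finset.mem_range.mpr hk'), Finset.card_range]
  have c1 : (∏ j ∈ S, ζ ^ (k : ℤ)) = ζ ^ (k * (r - 1)) := by
    rw [Finset.prod_const, hcard, zpow_natCast, ← pow_mul]
  -- the product ∏ (1 - ζ^(j-k)) = r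
  have hζ' : IsPrimitiveRoot ζ ((r - 1) + 1) := by
    rwa [Nat.sub_add_cancel hr.one_le]
  have hA0 := hζ'.prod_one_sub_pow_eq_order
  have c2 : (∏ j ∈ S, (1 - ζ ^ ((j : ℤ) - (k : ℤ)))) = (r : K) := by
    have hτval : ∀ j : ℕ, j < r → (((j + (2 * r - 1 - k)) % r) + (k + 1)) % r = j := by
      intro j hj
      rw [Nat.mod_add_mod]
      have e : j + (2 * r - 1 - k) + (k + 1) = j + r * 2 := by omega
      rw [e, Nat.add_mul_mod_self_left, Nat.mod_eq_of_lt hj]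
    have heq : (∏ j ∈ S, (1 - ζ ^ ((j : ℤ) - (k : ℤ))))
        = ∏ i ∈ Finset.range (r - 1), (1 - ζ ^ (i + 1)) := by
      refine Finset.prod_nbij' (fun j => (j + (2 * r - 1 - k)) % r)
        (fun i => (i + 1 + k) % r) ?_ ?_ ?_ ?_ ?_
      · intro j hj
        rw [hS, Finset.mem_erase, Finset.mem_range] at hj
        obtain ⟨hjk, hjr⟩ := hj
        set t := (j + (2 * r - 1 - k)) % r with ht
        have htr : t < r := Nat.mod_lt _ hrpos
        have htv := hτval j hjr
        rw [Finset.mem_range]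
        rcases Nat.lt_or_ge t (r - 1) with h | h
        · exact h
        · exfalso
          have htt : t = r - 1 := by omega
          rw [ht] at htt
          rw [htt] at htv
          have hkk : (r - 1 + (k + 1)) % r = k := by
            have e : r - 1 + (k + 1) = k + r * 1 := by omega
            rw [e, Nat.add_mul_mod_self_left, Nat.mod_eq_of_lt hk']
          exact hjk (by rw [hkk] at htv; omega)
      · intro i hi
        rw [Finset.mem_range] at hi
        have hlt : (i + 1 + k) % r < r := Nat.mod_lt _ hrpos
        rw [hS, Finset.mem_erase, Finset.mem_range]
        constructor
        · show (i + 1 + k) % r ≠ k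
          intro hcontra
          have hk0 : k % r = k := Nat.mod_eq_of_lt hk'
          have h6 : ((i + 1) + k) % r = (0 + k) % r := by
            rw [show (i + 1) + k = i + 1 + k from rfl, hcontra, zero_add, hk0]
          have := aux_cancel (show i + 1 < r by omega) hrpos h6
          omega
        · exact hlt
      · intro j hj
        rw [hS, Finset.mem_erase, Finset.mem_range] at hj
        show ((j + (2 * r - 1 - k)) % r + 1 + k) % r = j
        rw [show (j + (2 * r - 1 - k)) % r + 1 + k
            = (j + (2 * r - 1 - k)) % r + (k + 1) by ring]
        exact hτval j hj.2
      · intro i hi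
        rw [Finset.mem_range] at hi
        show ((i + 1 + k) % r + (2 * r - 1 - k)) % r = i
        rw [Nat.mod_add_mod]
        have e : i + 1 + k + (2 * r - 1 - k) = i + r * 2 := by omega
        rw [e, Nat.add_mul_mod_self_left, Nat.mod_eq_of_lt (by omega : i < r)]
      · intro j hj
        rw [hS, Finset.mem_erase, Finset.mem_range] at hj
        have htv := hτval j hj.2
        congr 1
        refine hznz _ _ ?_
        have hmeq : ((j + (2 * r - 1 - k)) % r + (k + 1)) ≡ j [MOD r] := by
          unfold Nat.ModEq
          rw [htv, Nat.mod_eq_of_lt hj.2]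
        have hdvd := hmeq.dvd
        refine Int.dvd_neg.mp ?_
        convert hdvd using 1
        push_cast
        ring
    rw [heq, hA0, Nat.cast_sub hr.one_le]
    ring
  -- the product ∏_{range r} (α₀ - ζ^(-k-j) β₀) = α₀^r - β₀^r
  have hprod : ∀ a b : K, ∏ i ∈ Finset.range r, (a - ζ ^ i * b) = a ^ r - b ^ r := by
    intro a b
    rcases eq_or_ne b 0 with rfl | hb
    · simp [Finset.prod_const, zero_pow hr0]
    · have hpoly := X_pow_sub_C_eq_prod hζ hrpos (one_pow r)
      have h2 := congrArg (fun p : Polynomial K => Polynomial.eval (a / b) p * b ^ r) hpoly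
      simp only [eval_sub, eval_pow, eval_X, eval_C, eval_prod, mul_one] at h2
      have h3 : (∏ i ∈ Finset.range r, (a / b - ζ ^ i)) * b ^ r
          = ∏ i ∈ Finset.range r, (a - ζ ^ i * b) := by
        rw [show (b : K) ^ r = b ^ (Finset.range r).card by rw [Finset.card_range],
          Finset.prod_mul_pow_card]
        exact Finset.prod_congr rfl fun i _ => by
          rw [sub_mul, div_mul_cancel₀ a hb]
      have h4 : ((a / b) ^ r - 1) * b ^ r = a ^ r - b ^ r := by
        rw [div_pow, sub_mul, div_mul_cancel₀ _ (pow_ne_zero r hb), one_mul]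
      rw [← h3, ← h2, h4]
  have hσ0 : ∀ j : ℕ, j < r → ((2 * r - k - j) % r + (k + j)) % r = 0 := by
    intro j hj
    rw [Nat.mod_add_mod]
    have e : 2 * r - k - j + (k + j) = 2 * r := by omega
    rw [e, show 2 * r = r * 2 by ring, Nat.mul_mod_right]
  have hfull : (∏ j ∈ Finset.range r, (α₀ - ζ ^ (-(k : ℤ) - (j : ℤ)) * β₀))
      = α₀ ^ r - β₀ ^ r := by
    rw [← hprod α₀ β₀]
    refine Finset.prod_nbij' (fun j => (2 * r - k - j) % r) (fun i => (2 * r - k - i) % r)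
      ?_ ?_ ?_ ?_ ?_
    · intro j _; exact Finset.mem_range.mpr (Nat.mod_lt _ hrpos)
    · intro i _; exact Finset.mem_range.mpr (Nat.mod_lt _ hrpos)
    · intro j hj
      rw [Finset.mem_range] at hj
      have h1' := hσ0 j hj
      have hσlt : (2 * r - k - j) % r < r := Nat.mod_lt _ hrpos
      have h2' := hσ0 _ hσlt
      show (2 * r - k - (2 * r - k - j) % r) % r = j
      refine aux_cancel (M := k + (2 * r - k - j) % r) (Nat.mod_lt _ hrpos) hj ?_
      rw [h2']
      rw [show j + (k + (2 * r - k - j) % r) = (2 * r - k - j) % r + (k + j) by ring, h1']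
    · intro i hi
      rw [Finset.mem_range] at hi
      have h1' := hσ0 i hi
      have hσlt : (2 * r - k - i) % r < r := Nat.mod_lt _ hrpos
      have h2' := hσ0 _ hσlt
      show (2 * r - k - (2 * r - k - i) % r) % r = i
      refine aux_cancel (M := k + (2 * r - k - i) % r) (Nat.mod_lt _ hrpos) hi ?_
      rw [h2']
      rw [show i + (k + (2 * r - k - i) % r) = (2 * r - k - i) % r + (k + i) by ring, h1']
    · intro j hj
      rw [Finset.mem_range] at hj
      show α₀ - ζ ^ (-(k : ℤ) - (j : ℤ)) * β₀ = α₀ - ζ ^ ((2 * r - k - j) % r) * β₀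
      congr 2
      refine hznz _ _ ?_
      have hdvd : (r : ℤ) ∣ (((2 * r - k - j) % r : ℕ) : ℤ) + ((k : ℤ) + j) := by
        have h0 := hσ0 j hj
        have h0' : (r : ℕ) ∣ (2 * r - k - j) % r + (k + j) := Nat.dvd_of_mod_eq_zero h0
        have := Int.natCast_dvd_natCast.mpr h0'
        push_cast at this ⊢
        convert this using 1
      convert hdvd using 1
      push_cast
      ring
  have c3 : (α₀ - ζ ^ (-(2 * (k : ℤ))) * β₀) *
      (∏ j ∈ S, (α₀ - ζ ^ (-(k : ℤ) - (j : ℤ)) * β₀)) = α₀ ^ r - β₀ ^ r := by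
    have hmem : k ∈ Finset.range r := Finset.mem_range.mpr hk'
    have e3 : ζ ^ (-(2 * (k : ℤ))) = ζ ^ (-(k : ℤ) - (k : ℤ)) := by
      congr 1
      ring
    rw [e3, ← hfull]
    exact Finset.mul_prod_erase (Finset.range r)
      (fun j : ℕ => α₀ - ζ ^ (-(k : ℤ) - (j : ℤ)) * β₀) hmem
  -- assemble
  have hzk : ζ ^ (k * (r - 1)) * ζ ^ k = 1 := by
    rw [← pow_add]
    have e : k * (r - 1) + k = k * r := by
      have e2 : k * (r - 1) + k = k * ((r - 1) + 1) := by ring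
      rw [e2, Nat.sub_add_cancel hr.one_le]
    rw [e, mul_comm k r, pow_mul, h1, one_pow]
  have goal1 : (∏ j ∈ S, (γ k - γ j))
      = (r : K) * (α₀ ^ r - β₀ ^ r) / (ζ ^ k * (α₀ - ζ ^ (-(2 * (k : ℤ))) * β₀)) := by
    rw [eq_div_iff hD, hP, c1, c2]
    calc ζ ^ (k * (r - 1)) * ((r : K) * ∏ j ∈ S, (α₀ - ζ ^ (-(k : ℤ) - (j : ℤ)) * β₀)) *
          (ζ ^ k * (α₀ - ζ ^ (-(2 * (k : ℤ))) * β₀))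
        = (ζ ^ (k * (r - 1)) * ζ ^ k) * ((r : K) *
            ((α₀ - ζ ^ (-(2 * (k : ℤ))) * β₀) *
              ∏ j ∈ S, (α₀ - ζ ^ (-(k : ℤ) - (j : ℤ)) * β₀))) := by ring
      _ = (r : K) * (α₀ ^ r - β₀ ^ r) := by rw [hzk, c3, one_mul]
  refine ⟨goal1, ?_⟩
  have hαβδ : α₀ ^ r - β₀ ^ r = -δ := by rw [hα, hβ]; ring
  rw [goal1, hαβδ]
  ring
end

section
/- Assume Δ ≠ 0. Then ∏_{k=0}^{r−1} ∏_{j=0, j≠k}^{r−1} (γ_k − γ_j) = r^r · Δ^{(r−1)/2}. Equivalently, the discriminant of the monic degree-r polynomial F, which equals (−1)^{r(r−1)/2} times this double product, is (−1)^{(r−1)/2} · r^r · Δ^{(r−1)/2}. -/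
open Polynomial

open Finset

-- transfer a product over ZMod r to a product over range r
lemma aux_zmod_prod {M : Type*} [CommMonoid M] {r : ℕ} [NeZero r] (f : ZMod r → M) :
    ∏ m : ZMod r, f m = ∏ i ∈ Finset.range r, f (i : ZMod r) := by
  refine (Finset.prod_nbij' (fun m : ZMod r => m.val) (fun i : ℕ => (i : ZMod r))
    (fun a _ => Finset.mem_range.mpr a.val_lt) (fun a _ => Finset.mem_univ _)
    (fun a _ => ZMod.natCast_rightInverse a) (fun a ha => ZMod.val_cast_of_lt (Finset.mem_range.mp ha))
    (fun a _ => by rw [ZMod.natCast_rightInverse a]))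

lemma aux_zmod_prod_erase {M : Type*} [CommMonoid M] {r : ℕ} [NeZero r] (f : ℕ → M)
    (g : ZMod r → M) (hfg : ∀ a ∈ Finset.range r, f a = g (a : ZMod r)) {k : ℕ} (hk : k < r) :
    ∏ j ∈ (Finset.range r).erase k, f j = ∏ j ∈ Finset.univ.erase (k : ZMod r), g j := by
  refine Finset.prod_nbij' (fun i : ℕ => (i : ZMod r)) (fun m : ZMod r => m.val)
    ?_ ?_ ?_ ?_ ?_
  · intro a ha
    obtain ⟨hne, ha⟩ := Finset.mem_erase.mp ha
    refine Finset.mem_erase.mpr ⟨fun h => hne ?_, Finset.mem_univ _⟩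
    have := congrArg ZMod.val h
    rwa [ZMod.val_cast_of_lt (Finset.mem_range.mp ha), ZMod.val_cast_of_lt hk] at this
  · intro b hb
    obtain ⟨hne, -⟩ := Finset.mem_erase.mp hb
    refine Finset.mem_erase.mpr ⟨fun h => hne ?_, Finset.mem_range.mpr b.val_lt⟩
    simp only [← h]; exact (ZMod.natCast_rightInverse b).symm
  · intro a ha
    exact ZMod.val_cast_of_lt (Finset.mem_range.mp (Finset.mem_erase.mp ha).2)
  · intro b _; exact ZMod.natCast_rightInverse b
  · intro a ha; exact hfg a (Finset.mem_erase.mp ha).2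

-- product formula over range
lemma aux_prod_range {K : Type*} [Field K] {r : ℕ} (hr : 0 < r) {ζ : K}
    (hζ : IsPrimitiveRoot ζ r) (x y : K) :
    ∏ i ∈ Finset.range r, (x - ζ ^ i * y) = x ^ r - y ^ r := by
  classical
  haveI : NeZero r := ⟨hr.ne'⟩
  have himg : nthRootsFinset r (1 : K) = (Finset.range r).image (ζ ^ ·) := by
    ext η
    simp only [Polynomial.mem_nthRootsFinset hr (1 : K), Finset.mem_image, Finset.mem_range]
    constructor
    · intro h
      obtain ⟨i, hi, hpow⟩ := hζ.eq_pow_of_pow_eq_one h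
      exact ⟨i, hi, hpow⟩
    · rintro ⟨i, _, rfl⟩
      rw [← pow_mul, mul_comm, pow_mul, hζ.pow_eq_one, one_pow]
  rw [hζ.pow_sub_pow_eq_prod_sub_mul x y hr, himg,
    Finset.prod_image (fun a ha b hb h =>
      hζ.pow_inj (Finset.mem_range.mp ha) (Finset.mem_range.mp hb) h)]

-- polynomial version
lemma aux_poly_prod_range {K : Type*} [Field K] {r : ℕ} (hr : 0 < r) {ζ : K}
    (hζ : IsPrimitiveRoot ζ r) :
    ∏ i ∈ Finset.range r, (X - C (ζ ^ i)) = X ^ r - 1 := by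
  classical
  haveI : NeZero r := ⟨hr.ne'⟩
  have himg : nthRootsFinset r (1 : K) = (Finset.range r).image (ζ ^ ·) := by
    ext η
    simp only [Polynomial.mem_nthRootsFinset hr (1 : K), Finset.mem_image, Finset.mem_range]
    constructor
    · intro h
      obtain ⟨i, hi, hpow⟩ := hζ.eq_pow_of_pow_eq_one h
      exact ⟨i, hi, hpow⟩
    · rintro ⟨i, _, rfl⟩
      rw [← pow_mul, mul_comm, pow_mul, hζ.pow_eq_one, one_pow]
  rw [X_pow_sub_one_eq_prod hr hζ, himg,
    Finset.prod_image (fun a ha b hb h =>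
      hζ.pow_inj (Finset.mem_range.mp ha) (Finset.mem_range.mp hb) h)]

lemma aux_pow_val {K : Type*} [Field K] {r : ℕ} [NeZero r] {ζ : K}
    (hζ : IsPrimitiveRoot ζ r) (i : ℕ) : ζ ^ ((i : ZMod r)).val = ζ ^ i := by
  rw [ZMod.val_natCast]
  conv_rhs => rw [← Nat.div_add_mod i r]
  rw [pow_add, pow_mul, hζ.pow_eq_one, one_pow, one_mul]

lemma aux_prod_one_sub {K : Type*} [Field K] {r : ℕ} [NeZero r] (hr : 0 < r) {ζ : K}
    (hζ : IsPrimitiveRoot ζ r) :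
    ∏ m ∈ Finset.univ.erase (0 : ZMod r), (1 - ζ ^ m.val) = (r : K) := by
  have hzpoly : ∏ m : ZMod r, (X - C (ζ ^ m.val)) = X ^ r - 1 := by
    rw [aux_zmod_prod (fun m : ZMod r => X - C (ζ ^ m.val))]
    rw [← aux_poly_prod_range hr hζ]
    exact Finset.prod_congr rfl fun i _ => by rw [aux_pow_val hζ]
  have split : (X - 1) * ∏ m ∈ Finset.univ.erase (0 : ZMod r), (X - C (ζ ^ m.val))
      = X ^ r - 1 := by
    rw [← hzpoly, ← Finset.mul_prod_erase Finset.univ _ (Finset.mem_univ (0 : ZMod r))]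
    simp
  have geom : (X - 1) * (∑ i ∈ Finset.range r, (X : K[X]) ^ i) = X ^ r - 1 := by
    rw [mul_comm]; exact geom_sum_mul X r
  have hXne : (X - 1 : K[X]) ≠ 0 := by
    simpa using X_sub_C_ne_zero (1 : K)
  have hkey : ∏ m ∈ Finset.univ.erase (0 : ZMod r), (X - C (ζ ^ m.val))
      = ∑ i ∈ Finset.range r, (X : K[X]) ^ i :=
    mul_left_cancel₀ hXne (split.trans geom.symm)
  have := congrArg (Polynomial.eval (1 : K)) hkey
  simpa [Polynomial.eval_prod, Polynomial.eval_finset_sum] using this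


/-- Lemma (discriminant): assume `Δ = s² - 4z^r ≠ 0`.  Then
`∏_{k=0}^{r−1} ∏_{j ≠ k} (γ_k − γ_j) = r^r · Δ^{(r−1)/2}`; equivalently, the
discriminant of the monic degree-`r` polynomial `F`, which equals
`(−1)^{r(r−1)/2}` times this double product, is `(−1)^{(r−1)/2} r^r Δ^{(r−1)/2}`. -/
theorem stmt_3 (r q : ℕ) [Fact q.Prime] (hq2 : q ≠ 2) (hr : r.Prime) (hr5 : 5 ≤ r)
    {K : Type*} [Field K] [CharZero K] [Algebra ℚ_[q] K] [IsAlgClosure ℚ_[q] K]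
    (ζ : K) (hζ : IsPrimitiveRoot ζ r)
    (z s : ℤ) (hz : z ≠ 0) (hΔ : (s ^ 2 - 4 * z ^ r : ℤ) ≠ 0)
    (δ α₀ β₀ : K) (hδ : δ ^ 2 = ((s ^ 2 - 4 * z ^ r : ℤ) : K))
    (hα : α₀ ^ r = -(((s : K) + δ) / 2)) (hβ : β₀ ^ r = -(((s : K) - δ) / 2))
    (hαβ : α₀ * β₀ = (z : K))
    (γ : ℤ → K) (hγ : ∀ j : ℤ, γ j = ζ ^ j * α₀ + ζ ^ (-j) * β₀) :
    (∏ k ∈ Finset.range r, ∏ j ∈ (Finset.range r).erase k, (γ k - γ j))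
        = (r : K) ^ r * ((s ^ 2 - 4 * z ^ r : ℤ) : K) ^ ((r - 1) / 2) ∧
    (-1 : K) ^ (r * (r - 1) / 2) *
        (∏ k ∈ Finset.range r, ∏ j ∈ (Finset.range r).erase k, (γ k - γ j))
        = (-1 : K) ^ ((r - 1) / 2) *
            ((r : K) ^ r * ((s ^ 2 - 4 * z ^ r : ℤ) : K) ^ ((r - 1) / 2)) := by
  classical
  have hr0 : 0 < r := hr.pos
  haveI : NeZero r := ⟨hr0.ne'⟩
  haveI : Fact r.Prime := ⟨hr⟩
  have hodd : Odd r := hr.odd_of_ne_two (by omega)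
  have heven : Even (r - 1) := Nat.Odd.sub_odd hodd odd_one
  obtain ⟨u, hu⟩ := heven
  have hu2 : (r - 1) / 2 = u := by omega
  have hΔK : ((s ^ 2 - 4 * z ^ r : ℤ) : K) ≠ 0 := Int.cast_ne_zero.mpr hΔ
  have hδ0 : δ ≠ 0 := by
    intro h; rw [h] at hδ; exact hΔK (hδ.symm.trans (by norm_num))
  set e : ZMod r → K := fun m => ζ ^ m.val with he
  have he_cast : ∀ i : ℕ, e (i : ZMod r) = ζ ^ i := fun i => aux_pow_val hζ i
  have he_zero : e 0 = 1 := by simp [he]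
  have he_add : ∀ a b : ZMod r, e (a + b) = e a * e b := by
    intro a b
    have h1 : ((a.val + b.val : ℕ) : ZMod r) = a + b := by
      push_cast
      rw [ZMod.natCast_rightInverse a, ZMod.natCast_rightInverse b]
    rw [← h1, he_cast, pow_add, ← he_cast a.val, ← he_cast b.val,
      ZMod.natCast_rightInverse a, ZMod.natCast_rightInverse b]
  have he_pow_r : ∀ m : ZMod r, (e m) ^ r = 1 := by
    intro m
    rw [he]
    simp only
    rw [← pow_mul, mul_comm, pow_mul, hζ.pow_eq_one, one_pow]
  set Γ : ZMod r → K := fun m => e m * α₀ + e (-m) * β₀ with hΓ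
  have hγΓ : ∀ i : ℕ, γ (i : ℤ) = Γ (i : ZMod r) := by
    intro i
    have hinv : e (i : ZMod r) * e (-(i : ZMod r)) = 1 := by
      rw [← he_add, add_neg_cancel, he_zero]
    rw [hγ, hΓ]
    simp only
    congr 1
    · rw [zpow_natCast, he_cast]
    · congr 1
      rw [zpow_neg, zpow_natCast, ← he_cast i]
      exact inv_eq_of_mul_eq_one_right hinv
  -- transfer the double product to `ZMod r`
  have hP : (∏ k ∈ Finset.range r, ∏ j ∈ (Finset.range r).erase k, (γ k - γ j))
      = ∏ k : ZMod r, ∏ j ∈ Finset.univ.erase k, (Γ k - Γ j) := by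
    rw [aux_zmod_prod (fun k : ZMod r => ∏ j ∈ Finset.univ.erase k, (Γ k - Γ j))]
    refine Finset.prod_congr rfl fun k hk => ?_
    exact aux_zmod_prod_erase _ _ (fun a _ => by rw [hγΓ, hγΓ])
      (Finset.mem_range.mp hk)
  -- factorization of each difference
  have hfact : ∀ k j : ZMod r, Γ k - Γ j = (e k - e j) * (α₀ - e (-k - j) * β₀) := by
    intro k j
    have h1 : e (-k) = e (-k - j) * e j := by
      rw [← he_add]; congr 1; ring
    have h2 : e (-j) = e (-k - j) * e k := by
      rw [← he_add]; congr 1; ring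
    rw [hΓ]
    simp only
    rw [h1, h2]
    ring
  have step1 : (∏ k : ZMod r, ∏ j ∈ Finset.univ.erase k, (Γ k - Γ j))
      = (∏ k : ZMod r, ∏ j ∈ Finset.univ.erase k, (e k - e j)) *
        (∏ k : ZMod r, ∏ j ∈ Finset.univ.erase k, (α₀ - e (-k - j) * β₀)) := by
    rw [← Finset.prod_mul_distrib]
    refine Finset.prod_congr rfl fun k _ => ?_
    rw [← Finset.prod_mul_distrib]
    exact Finset.prod_congr rfl fun j _ => hfact k j
  -- the "A" part
  have hA : ∀ k : ZMod r,
      ∏ j ∈ Finset.univ.erase k, (e k - e j) = (e k) ^ (r - 1) * (r : K) := by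
    intro k
    have h1 : ∏ m ∈ Finset.univ.erase (0 : ZMod r), (e k * (1 - e m))
        = ∏ j ∈ Finset.univ.erase k, (e k - e j) := by
      refine Finset.prod_equiv (Equiv.addLeft k) ?_ ?_
      · intro m
        simp [Finset.mem_erase, add_eq_left]
      · intro m _
        rw [show (Equiv.addLeft k) m = k + m from rfl, he_add]
        ring
    have hC : ∏ m ∈ Finset.univ.erase (0 : ZMod r), (1 - e m) = (r : K) := by
      simp only [he]
      exact aux_prod_one_sub hr0 hζ
    rw [← h1, Finset.prod_mul_distrib, Finset.prod_const,
      Finset.card_erase_of_mem (Finset.mem_univ _), Finset.card_univ, ZMod.card, hC]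
  have hAprod : (∏ k : ZMod r, ∏ j ∈ Finset.univ.erase k, (e k - e j)) = (r : K) ^ r := by
    have hprod_e : ∏ k : ZMod r, e k = 1 := by
      rw [aux_zmod_prod e]
      simp only [he_cast]
      rw [Finset.prod_pow_eq_pow_sum]
      have hsum : ∑ i ∈ Finset.range r, i = r * u := by
        have h2 := Finset.sum_range_id_mul_two r
        have h3 : r * (r - 1) = r * u * 2 := by rw [hu]; ring
        rw [h3] at h2
        exact Nat.eq_of_mul_eq_mul_right (by norm_num) h2
      rw [hsum, pow_mul, hζ.pow_eq_one, one_pow]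
    calc (∏ k : ZMod r, ∏ j ∈ Finset.univ.erase k, (e k - e j))
        = ∏ k : ZMod r, ((e k) ^ (r - 1) * (r : K)) :=
          Finset.prod_congr rfl fun k _ => hA k
      _ = (∏ k : ZMod r, e k) ^ (r - 1) * (r : K) ^ r := by
          rw [Finset.prod_mul_distrib, Finset.prod_pow, Finset.prod_const,
            Finset.card_univ, ZMod.card]
      _ = (r : K) ^ r := by rw [hprod_e, one_pow, one_mul]
  -- the "B" part
  have hD : ∏ m : ZMod r, (α₀ - e m * β₀) = -δ := by
    rw [aux_zmod_prod (fun m : ZMod r => α₀ - e m * β₀)]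
    simp only [he_cast]
    rw [aux_prod_range hr0 hζ α₀ β₀, hα, hβ]
    ring
  have hB : ∀ k : ZMod r,
      (α₀ - e (-k - k) * β₀) * (∏ j ∈ Finset.univ.erase k, (α₀ - e (-k - j) * β₀)) = -δ := by
    intro k
    have hre : ∏ j ∈ Finset.univ.erase k, (α₀ - e (-k - j) * β₀)
        = ∏ m ∈ Finset.univ.erase (-k - k), (α₀ - e m * β₀) := by
      refine Finset.prod_equiv (Equiv.subLeft (-k)) ?_ ?_
      · intro j
        simp [Finset.mem_erase, sub_right_inj]
      · intro j _
        rw [show (Equiv.subLeft (-k)) j = -k - j from rfl]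
    rw [hre]
    exact (Finset.mul_prod_erase Finset.univ (fun m => α₀ - e m * β₀)
      (Finset.mem_univ (-k - k))).trans hD
  have hBprod : (∏ k : ZMod r, ∏ j ∈ Finset.univ.erase k, (α₀ - e (-k - j) * β₀))
      = ((s ^ 2 - 4 * z ^ r : ℤ) : K) ^ ((r - 1) / 2) := by
    have h2ne : (-2 : ZMod r) ≠ 0 := by
      rw [neg_ne_zero]
      intro h
      have h' : ((2 : ℕ) : ZMod r) = 0 := by exact_mod_cast h
      rw [ZMod.natCast_eq_zero_iff] at h'
      have := Nat.le_of_dvd (by norm_num) h'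
      omega
    have h2K : ∏ k : ZMod r, (α₀ - e (-k - k) * β₀) = -δ := by
      refine (Fintype.prod_equiv (Equiv.mulLeft₀ (-2 : ZMod r) h2ne)
        (fun k => α₀ - e (-k - k) * β₀) (fun m => α₀ - e m * β₀) ?_).trans hD
      intro k
      rw [show (Equiv.mulLeft₀ (-2 : ZMod r) h2ne) k = -k - k by
        show (-2 : ZMod r) * k = -k - k; ring]
    have hmul : (∏ k : ZMod r, (α₀ - e (-k - k) * β₀)) *
        (∏ k : ZMod r, ∏ j ∈ Finset.univ.erase k, (α₀ - e (-k - j) * β₀)) = (-δ) ^ r := by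
      rw [← Finset.prod_mul_distrib,
        Finset.prod_congr rfl fun k _ => hB k, Finset.prod_const,
        Finset.card_univ, ZMod.card]
    rw [h2K] at hmul
    have hstep : (∏ k : ZMod r, ∏ j ∈ Finset.univ.erase k, (α₀ - e (-k - j) * β₀))
        = (-δ) ^ (r - 1) := by
      have hpow : (-δ) * (-δ) ^ (r - 1) = (-δ) ^ r := by
        rw [← pow_succ']
        congr 1
        omega
      exact mul_left_cancel₀ (neg_ne_zero.mpr hδ0) (hmul.trans hpow.symm)
    rw [hstep, Even.neg_pow ⟨u, hu⟩, hu2, show r - 1 = 2 * u by omega, pow_mul, hδ]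
  have hmain : (∏ k ∈ Finset.range r, ∏ j ∈ (Finset.range r).erase k, (γ k - γ j))
      = (r : K) ^ r * ((s ^ 2 - 4 * z ^ r : ℤ) : K) ^ ((r - 1) / 2) := by
    rw [hP, step1, hAprod, hBprod]
  refine ⟨hmain, ?_⟩
  have hru : r * (r - 1) / 2 = r * u := by
    have h1 : r * (r - 1) = r * u * 2 := by rw [hu]; ring
    rw [h1, Nat.mul_div_cancel _ (by norm_num)]
  have hpowEq : (-1 : K) ^ (r * (r - 1) / 2) = (-1 : K) ^ ((r - 1) / 2) := by
    rw [hru, hu2, mul_comm, pow_mul]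
    rcases Nat.even_or_odd u with h | h
    · rw [Even.neg_one_pow h, one_pow]
    · rw [Odd.neg_one_pow h, Odd.neg_one_pow hodd]
  rw [hmain, hpowEq]
end

section
/- Suppose the odd prime q divides both Δ and s, and that (z,s) satisfies conditions (i)–(ii). Then for all 0 ≤ j ≤ r−1 one has min{v_q(α₀), v_q(β₀)} = v_q(α₀ − ζ^j β₀) = v_q(s)/r, and moreover v_q(δ) = v_q(s). -/
open Polynomial

section helpers
variable {K : Type*} [Field K] (v : K → WithTop ℚ)
  (h0 : ∀ x, v x = ⊤ ↔ x = 0)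
  (hmul : ∀ x y, v (x * y) = v x + v y)
  (hmin : ∀ x y, min (v x) (v y) ≤ v (x + y))

include h0 hmul in
theorem v_one : v 1 = 0 := by
  have h := hmul 1 1
  rw [mul_one] at h
  have hne : v 1 ≠ ⊤ := by simp [h0]
  lift v 1 to ℚ using hne with a ha
  rw [show ((a:WithTop ℚ) + a) = ((a+a : ℚ) : WithTop ℚ) by norm_cast] at h
  have : a = a + a := WithTop.coe_injective h
  have : a = 0 := by linarith
  simp [this]

include h0 hmul in
theorem v_neg (x : K) : v (-x) = v x := by
  have hm1 : v (-1 : K) = 0 := by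
    have h := hmul (-1) (-1)
    rw [neg_one_mul, neg_neg, v_one v h0 hmul] at h
    have hne : v (-1 : K) ≠ ⊤ := by simp [h0]
    lift v (-1 : K) to ℚ using hne with a ha
    rw [show ((a:WithTop ℚ) + a) = ((a+a : ℚ) : WithTop ℚ) by norm_cast] at h
    have : a + a = 0 := by exact_mod_cast h.symm
    have : a = 0 := by linarith
    simp [this]
  have := hmul (-1) x
  rw [neg_one_mul, hm1, zero_add] at this
  exact this

include h0 hmul in
theorem v_pow (x : K) {a : ℚ} (hx : v x = (a : WithTop ℚ)) (n : ℕ) :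
    v (x ^ n) = ((n * a : ℚ) : WithTop ℚ) := by
  induction n with
  | zero => simpa using v_one v h0 hmul
  | succ n ih =>
    rw [pow_succ, hmul, ih, hx, ← WithTop.coe_add]
    norm_cast
    push_cast
    ring_nf

include h0 hmul hmin in
theorem v_add_eq (x y : K) (hlt : v x < v y) : v (x + y) = v x := by
  refine le_antisymm ?_ ?_
  · have h1 : min (v (x+y)) (v (-y)) ≤ v ((x+y) + (-y)) := hmin _ _
    rw [add_neg_cancel_right, v_neg v h0 hmul] at h1
    rcases min_le_iff.mp h1 with h | h
    · exact h
    · exact absurd h (not_le.mpr hlt)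
  · have := hmin x y
    rwa [min_eq_left hlt.le] at this

end helpers

/-- See `stmt_0`'s file: the unique valuation on an algebraic closure of `ℚ_q`
extending the `q`-adic valuation, normalized by `v q = 1`. -/
def IsExtVal (q : ℕ) [Fact q.Prime] {K : Type*} [Field K] [Algebra ℚ_[q] K]
    (v : K → WithTop ℚ) : Prop :=
  (∀ x, v x = ⊤ ↔ x = 0) ∧
  (∀ x y, v (x * y) = v x + v y) ∧
  (∀ x y, min (v x) (v y) ≤ v (x + y)) ∧
  (∀ x : ℚ_[q], x ≠ 0 → v (algebraMap ℚ_[q] K x) = ((x.valuation : ℚ) : WithTop ℚ))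

/-- Conditions (i)–(ii) on `(z, s)`: for every prime `ℓ` dividing both `s` and `z`,
`v_ℓ(z^r) > v_ℓ(s²)` and `r ∤ v_ℓ(s)`. -/
def SatisfiesCondIII (r : ℕ) (z s : ℤ) : Prop :=
  ∀ ℓ : ℕ, ℓ.Prime → (ℓ : ℤ) ∣ s → (ℓ : ℤ) ∣ z →
    padicValInt ℓ (s ^ 2) < padicValInt ℓ (z ^ r) ∧ ¬ (r ∣ padicValInt ℓ s)

-- v of integer casts
theorem v_intCast (q : ℕ) [Fact q.Prime] {K : Type*} [Field K] [Algebra ℚ_[q] K]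
    (v : K → WithTop ℚ) (hv : IsExtVal q v) (n : ℤ) (hn : n ≠ 0) :
    v ((n : ℤ) : K) = ((padicValInt q n : ℚ) : WithTop ℚ) := by
  obtain ⟨h0, hmul, hmin, halg⟩ := hv
  have h1 : ((n : ℤ) : K) = algebraMap ℚ_[q] K ((n : ℤ) : ℚ_[q]) := by
    simp
  have h2 : ((n : ℤ) : ℚ_[q]) ≠ 0 := by exact_mod_cast hn
  rw [h1, halg _ h2, Padic.valuation_intCast]
  norm_num

/-- Lemma (divisibility): suppose the odd prime `q` divides both `Δ = s² - 4z^r` and `s`,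
and `(z, s)` satisfies conditions (i)–(ii).  Then for all `0 ≤ j ≤ r − 1`,
`min (v_q α₀) (v_q β₀) = v_q (α₀ − ζ^j β₀) = v_q(s)/r`, and `v_q δ = v_q s`. -/
theorem stmt_4 (r q : ℕ) [Fact q.Prime] (hq2 : q ≠ 2) (hr : r.Prime) (hr5 : 5 ≤ r)
    {K : Type*} [Field K] [Algebra ℚ_[q] K] [IsAlgClosure ℚ_[q] K]
    (v : K → WithTop ℚ) (hv : IsExtVal q v)
    (ζ : K) (hζ : IsPrimitiveRoot ζ r)
    (z s : ℤ) (hz : z ≠ 0)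
    (δ α₀ β₀ : K) (hδ : δ ^ 2 = ((s ^ 2 - 4 * z ^ r : ℤ) : K))
    (hα : α₀ ^ r = -(((s : K) + δ) / 2)) (hβ : β₀ ^ r = -(((s : K) - δ) / 2))
    (hαβ : α₀ * β₀ = (z : K))
    (hcond : SatisfiesCondIII r z s)
    (hqΔ : (q : ℤ) ∣ (s ^ 2 - 4 * z ^ r)) (hqs : (q : ℤ) ∣ s) :
    (∀ j : ℕ, j ≤ r - 1 →
      min (v α₀) (v β₀) = v (α₀ - ζ ^ j * β₀) ∧
      v (α₀ - ζ ^ j * β₀) = (((padicValInt q s : ℚ) / (r : ℚ) : ℚ) : WithTop ℚ)) ∧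
    v δ = (((padicValInt q s : ℚ) : ℚ) : WithTop ℚ) := by
  have hq : q.Prime := Fact.out
  haveI : CharZero K := charZero_of_injective_algebraMap (algebraMap ℚ_[q] K).injective
  have hqd2 : ¬ (q ∣ 2) := fun h => hq2 ((Nat.prime_dvd_prime_iff_eq hq Nat.prime_two).mp h)
  obtain ⟨h0, hmul, hmin, halg⟩ := hv
  have hv' : IsExtVal q v := ⟨h0, hmul, hmin, halg⟩
  -- q divides z
  have hqz : (q : ℤ) ∣ z := by
    have h4 : (q : ℤ) ∣ 4 * z ^ r := by
      have : (q : ℤ) ∣ s ^ 2 := Dvd.dvd.pow hqs (by norm_num)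
      have := dvd_sub this hqΔ
      simpa using this
    have hq4 : ¬ (q : ℤ) ∣ 4 := by
      intro h
      have : (q : ℤ) ∣ 2 ^ 2 := by norm_num at h ⊢; exact_mod_cast h
      have := (Int.Prime.dvd_pow' (by exact_mod_cast hq) this)
      exact hqd2 (by exact_mod_cast this)
    have : (q:ℤ) ∣ z ^ r := ((Int.Prime.dvd_mul' (by exact_mod_cast hq) h4).resolve_left hq4)
    exact Int.Prime.dvd_pow' (by exact_mod_cast hq) this
  -- s ≠ 0
  have hs : s ≠ 0 := by
    intro h
    subst h
    exact (hcond q hq hqs hqz).2 (by simp [padicValInt])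
  obtain ⟨hval, hrdvd⟩ := hcond q hq hqs hqz
  -- numeric valuations
  set A : ℚ := (padicValInt q s : ℚ) with hA
  set B : ℚ := (padicValInt q z : ℚ) with hB
  have hvs : v ((s : ℤ) : K) = (A : WithTop ℚ) := v_intCast q v hv' s hs
  have hvz : v ((z : ℤ) : K) = (B : WithTop ℚ) := v_intCast q v hv' z hz
  have hq4' : padicValInt q 4 = 0 := by
    apply padicValInt.eq_zero_of_not_dvd
    intro h
    have : (q : ℤ) ∣ 2 ^ 2 := by norm_num at h ⊢; exact_mod_cast h
    have := (Int.Prime.dvd_pow' (by exact_mod_cast hq) this)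
    exact hqd2 (by exact_mod_cast this)
  have hq2' : padicValInt q 2 = 0 := by
    apply padicValInt.eq_zero_of_not_dvd
    intro h
    exact hqd2 (by exact_mod_cast h)
  have hv4 : v ((4 : K)) = (0 : WithTop ℚ) := by
    have := v_intCast q v hv' 4 (by norm_num)
    rw [hq4'] at this
    simpa using this
  have hv2 : v ((2 : K)) = (0 : WithTop ℚ) := by
    have := v_intCast q v hv' 2 (by norm_num)
    rw [hq2'] at this
    simpa using this
  have hv2inv : v ((2 : K)⁻¹) = (0 : WithTop ℚ) := by
    have h := hmul 2 (2 : K)⁻¹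
    rw [mul_inv_cancel₀ (two_ne_zero (α := K)), v_one v h0 hmul, hv2, zero_add] at h
    exact h.symm
  -- key inequality 2A < rB
  have hkey : 2 * A < r * B := by
    have h1 : padicValInt q (s ^ 2) = 2 * padicValInt q s := by
      rw [padicValInt, padicValInt]
      rw [show (s^2).natAbs = s.natAbs ^ 2 by simp [Int.natAbs_pow]]
      exact padicValNat.pow _ 2
    have h2 : padicValInt q (z ^ r) = r * padicValInt q z := by
      rw [padicValInt, padicValInt]
      rw [show (z^r).natAbs = z.natAbs ^ r by simp [Int.natAbs_pow]]
      exact padicValNat.pow _ r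
    rw [h1, h2] at hval
    rw [hA, hB]
    exact_mod_cast hval
  have hr0 : (0:ℚ) < r := by positivity
  -- α₀ β₀ nonzero
  have hα0 : α₀ ≠ 0 := by
    intro h; rw [h, zero_mul] at hαβ; exact hz (by exact_mod_cast hαβ.symm)
  have hβ0 : β₀ ≠ 0 := by
    intro h; rw [h, mul_zero] at hαβ; exact hz (by exact_mod_cast hαβ.symm)
  obtain ⟨a, ha⟩ : ∃ a : ℚ, v α₀ = (a : WithTop ℚ) := by
    have : v α₀ ≠ ⊤ := by simp [h0, hα0]
    exact ⟨(v α₀).untop this, ((v α₀).coe_untop this).symm⟩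
  obtain ⟨b, hb⟩ : ∃ b : ℚ, v β₀ = (b : WithTop ℚ) := by
    have : v β₀ ≠ ⊤ := by simp [h0, hβ0]
    exact ⟨(v β₀).untop this, ((v β₀).coe_untop this).symm⟩
  -- a + b = B
  have hab : a + b = B := by
    have h := hmul α₀ β₀
    rw [hαβ, hvz, ha, hb, ← WithTop.coe_add] at h
    exact_mod_cast h.symm
  -- v δ = A
  have hvδ : v δ = (A : WithTop ℚ) := by
    have hXY : δ ^ 2 = ((s:K))^2 + (-(4 * ((z:K))^r)) := by
      rw [hδ]; push_cast; ring
    have hvX : v (((s:K))^2) = ((2 * A : ℚ) : WithTop ℚ) := v_pow v h0 hmul _ hvs 2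
    have hvY : v (4 * ((z:K))^r) = ((r * B : ℚ) : WithTop ℚ) := by
      rw [hmul, hv4, v_pow v h0 hmul _ hvz r, zero_add]
    have hlt : v (((s:K))^2) < v (-(4 * ((z:K))^r)) := by
      rw [v_neg v h0 hmul, hvX, hvY]
      exact_mod_cast hkey
    have h := v_add_eq v h0 hmul hmin _ _ hlt
    rw [← hXY, hvX] at h
    -- now v (δ^2) = 2A
    have hδ0 : δ ≠ 0 := by
      intro hd
      rw [hd] at h
      simp only [zero_pow, ne_eq, OfNat.ofNat_ne_zero, not_false_eq_true] at h
      rw [(h0 0).mpr rfl] at h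
      exact (WithTop.top_ne_coe) h
    obtain ⟨d, hd⟩ : ∃ d : ℚ, v δ = (d : WithTop ℚ) := by
      have : v δ ≠ ⊤ := by simp [h0, hδ0]
      exact ⟨(v δ).untop this, ((v δ).coe_untop this).symm⟩
    rw [v_pow v h0 hmul _ hd 2] at h
    have h2 : (2:ℚ) * d = 2 * A := by exact_mod_cast h
    have : d = A := by linarith
    rw [hd, this]
  -- v(s+δ) = r a, v(s-δ) = r b
  have hvsd1 : v ((s:K) + δ) = ((r * a : ℚ) : WithTop ℚ) := by
    have h1 : ((s:K) + δ) = α₀ ^ r * (-(2:K)) := by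
      rw [hα]; field_simp
    rw [h1, hmul, v_neg v h0 hmul, hv2, add_zero, v_pow v h0 hmul _ ha r]
  have hvsd2 : v ((s:K) - δ) = ((r * b : ℚ) : WithTop ℚ) := by
    have h1 : ((s:K) - δ) = β₀ ^ r * (-(2:K)) := by
      rw [hβ]; field_simp
    rw [h1, hmul, v_neg v h0 hmul, hv2, add_zero, v_pow v h0 hmul _ hb r]
  -- min (r a) (r b) = A
  have hminA : min (r * a) (r * b) = A := by
    have hle : min (v ((s:K) + δ)) (v ((s:K) - δ)) ≤ (A : WithTop ℚ) := by
      have h := hmin ((s:K) + δ) ((s:K) - δ)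
      rw [show ((s:K) + δ) + ((s:K) - δ) = 2 * (s:K) by ring, hmul, hv2, hvs, zero_add] at h
      exact h
    have hge1 : (A : WithTop ℚ) ≤ v ((s:K) + δ) := by
      have h := hmin ((s:K)) δ
      rw [hvs, hvδ, min_self] at h
      exact h
    have hge2 : (A : WithTop ℚ) ≤ v ((s:K) - δ) := by
      have h := hmin ((s:K)) (-δ)
      rw [hvs, v_neg v h0 hmul, hvδ, min_self] at h
      rw [sub_eq_add_neg]
      exact h
    rw [hvsd1, hvsd2] at hle
    rw [hvsd1] at hge1
    rw [hvsd2] at hge2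
    rw [← WithTop.coe_min] at hle
    have hle' : min ((r:ℚ)*a) ((r:ℚ)*b) ≤ A := by exact_mod_cast hle
    have h1 : A ≤ (r:ℚ) * a := by exact_mod_cast hge1
    have h2 : A ≤ (r:ℚ) * b := by exact_mod_cast hge2
    exact le_antisymm hle' (le_min h1 h2)
  -- v (ζ^j) = 0
  have hζ0 : ζ ≠ 0 := hζ.ne_zero (by omega)
  have hvζ : v ζ = ((0:ℚ) : WithTop ℚ) := by
    obtain ⟨c, hc⟩ : ∃ c : ℚ, v ζ = (c : WithTop ℚ) := by
      have : v ζ ≠ ⊤ := by simp [h0, hζ0]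
      exact ⟨(v ζ).untop this, ((v ζ).coe_untop this).symm⟩
    have h := v_pow v h0 hmul _ hc r
    rw [hζ.pow_eq_one, v_one v h0 hmul] at h
    have : (r : ℚ) * c = 0 := by exact_mod_cast h.symm
    have : c = 0 := by
      rcases mul_eq_zero.mp this with h' | h'
      · exact absurd h' (by positivity)
      · exact h'
    rw [hc, this]
  -- main case split
  rcases min_choice (r * a) (r * b) with hmincase | hmincase
  all_goals rw [hmincase] at hminA
  · -- r a = A, so a < b
    have hsum : (r:ℚ)*a + (r:ℚ)*b = (r:ℚ)*B := by rw [← hab]; ring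
    have hblt : a < b := by
      have h1 : (r:ℚ)*a < (r:ℚ)*b := by linarith [hminA, hkey, hsum]
      exact (mul_lt_mul_iff_right₀ hr0).mp h1
    have haA : a = A / r := by field_simp; linarith [hminA]
    constructor
    · intro j hj
      have hvjb : v (ζ ^ j * β₀) = (b : WithTop ℚ) := by
        rw [hmul, v_pow v h0 hmul _ hvζ j, hb, mul_zero, ← WithTop.coe_add]
        norm_num
      have heq : v (α₀ - ζ ^ j * β₀) = (a : WithTop ℚ) := by
        rw [sub_eq_add_neg]
        rw [v_add_eq v h0 hmul hmin _ _ (by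
          rw [v_neg v h0 hmul, ha, hvjb]; exact_mod_cast hblt)]
        exact ha
      refine ⟨?_, ?_⟩
      · rw [heq, ha, hb, min_eq_left (by exact_mod_cast hblt.le)]
      · rw [heq, haA]
    · exact hvδ
  · -- r b = A, so b < a
    have hsum : (r:ℚ)*a + (r:ℚ)*b = (r:ℚ)*B := by rw [← hab]; ring
    have hblt : b < a := by
      have h1 : (r:ℚ)*b < (r:ℚ)*a := by linarith [hminA, hkey, hsum]
      exact (mul_lt_mul_iff_right₀ hr0).mp h1
    have hbA : b = A / r := by field_simp; linarith [hminA]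
    constructor
    · intro j hj
      have hvjb : v (ζ ^ j * β₀) = (b : WithTop ℚ) := by
        rw [hmul, v_pow v h0 hmul _ hvζ j, hb, mul_zero, ← WithTop.coe_add]
        norm_num
      have heq : v (α₀ - ζ ^ j * β₀) = (b : WithTop ℚ) := by
        rw [show α₀ - ζ ^ j * β₀ = -(ζ ^ j * β₀) + α₀ by ring]
        rw [v_add_eq v h0 hmul hmin _ _ (by
          rw [v_neg v h0 hmul, ha, hvjb]; exact_mod_cast hblt)]
        rw [v_neg v h0 hmul]; exact hvjb
      refine ⟨?_, ?_⟩
      · rw [heq, ha, hb, min_eq_right (by exact_mod_cast hblt.le)]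
      · rw [heq, hbA]
    · exact hvδ
end

section
/- Suppose q = r, r ∣ Δ, r ∣ s, and that (z,s) satisfies conditions (i)–(ii). Then for all 0 ≤ j, k ≤ r−1 with j ≠ k one has v_r(γ_k − γ_j) = 1/(r−1) + v_r(s)/r. -/
open Polynomial

namespace ExtValAux

variable {q : ℕ} [Fact q.Prime] {K : Type*} [Field K] [Algebra ℚ_[q] K]
  {v : K → WithTop ℚ}

lemma exq (hv : IsExtVal q v) {x : K} (hx : x ≠ 0) : ∃ c : ℚ, v x = (c : WithTop ℚ) := by
  rcases eq_or_ne (v x) ⊤ with h | h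
  · exact absurd ((hv.1 x).mp h) hx
  · exact ⟨(v x).untop h, (WithTop.coe_untop _ h).symm⟩

lemma v_one (hv : IsExtVal q v) : v (1 : K) = ((0 : ℚ) : WithTop ℚ) := by
  obtain ⟨c, hc⟩ := exq hv (one_ne_zero : (1:K) ≠ 0)
  have h := hv.2.1 1 1
  rw [mul_one, hc, ← WithTop.coe_add] at h
  have : c = c + c := by exact_mod_cast h
  have hc0 : c = 0 := by linarith
  rw [hc, hc0]

lemma v_neg (hv : IsExtVal q v) (x : K) : v (-x) = v x := by
  have hm1 : v (-1 : K) = ((0:ℚ) : WithTop ℚ) := by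
    obtain ⟨c, hc⟩ := exq hv (neg_ne_zero.mpr (one_ne_zero : (1:K) ≠ 0))
    have h := hv.2.1 (-1) (-1)
    rw [neg_mul_neg, one_mul, v_one hv, hc, ← WithTop.coe_add] at h
    have : (0:ℚ) = c + c := by exact_mod_cast h
    have hc0 : c = 0 := by linarith
    rw [hc, hc0]
  have : -x = -1 * x := by ring
  rw [this, hv.2.1, hm1]
  simp

lemma v_pow (hv : IsExtVal q v) {x : K} {c : ℚ} (h : v x = (c : WithTop ℚ)) (n : ℕ) :
    v (x ^ n) = (((n : ℚ) * c : ℚ) : WithTop ℚ) := by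
  induction n with
  | zero => simpa using v_one hv
  | succ n ih =>
    rw [pow_succ, hv.2.1, ih, h, ← WithTop.coe_add]
    congr 1
    push_cast
    ring

lemma v_inv (hv : IsExtVal q v) {x : K} (hx : x ≠ 0) {c : ℚ} (h : v x = (c : WithTop ℚ)) :
    v x⁻¹ = ((-c : ℚ) : WithTop ℚ) := by
  obtain ⟨d, hd⟩ := exq hv (inv_ne_zero hx)
  have hm := hv.2.1 x x⁻¹
  rw [mul_inv_cancel₀ hx, v_one hv, h, hd, ← WithTop.coe_add] at hm
  have : (0:ℚ) = c + d := by exact_mod_cast hm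
  have : d = -c := by linarith
  rw [hd, this]

lemma v_zpow_zero (hv : IsExtVal q v) {x : K} (hx : x ≠ 0)
    (h : v x = ((0 : ℚ) : WithTop ℚ)) (m : ℤ) : v (x ^ m) = ((0 : ℚ) : WithTop ℚ) := by
  rcases m with n | n
  · rw [Int.ofNat_eq_coe, zpow_natCast]
    simpa using v_pow hv h n
  · rw [zpow_negSucc]
    have hp : v (x ^ (n + 1)) = ((0:ℚ) : WithTop ℚ) := by simpa using v_pow hv h (n+1)
    simpa using v_inv hv (pow_ne_zero (n+1) hx) hp

lemma v_add_eq (hv : IsExtVal q v) {x y : K} {cx cy : ℚ}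
    (hx : v x = (cx : WithTop ℚ)) (hy : v y = (cy : WithTop ℚ)) (h : cx < cy) :
    v (x + y) = (cx : WithTop ℚ) := by
  have h1 : (cx : WithTop ℚ) ≤ v (x + y) := by
    have hm := hv.2.2.1 x y
    rwa [hx, hy, min_eq_left (by exact_mod_cast h.le : (cx : WithTop ℚ) ≤ cy)] at hm
  have h2 : v (x + y) ≤ (cx : WithTop ℚ) := by
    by_contra hlt
    push_neg at hlt
    have hminle := hv.2.2.1 (x + y) (-y)
    rw [v_neg hv, hy] at hminle
    have hxy : x + y + -y = x := by ring
    rw [hxy, hx] at hminle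
    exact absurd (lt_of_lt_of_le
      (lt_min hlt (by exact_mod_cast h : (cx : WithTop ℚ) < cy)) hminle) (lt_irrefl _)
  exact le_antisymm h2 h1

lemma v_prod (hv : IsExtVal q v) {ι : Type*} (s : Finset ι) (f : ι → K) (c : ι → ℚ)
    (h : ∀ i ∈ s, v (f i) = ((c i : ℚ) : WithTop ℚ)) :
    v (∏ i ∈ s, f i) = ((∑ i ∈ s, c i : ℚ) : WithTop ℚ) := by
  classical
  induction s using Finset.induction_on with
  | empty => simpa using v_one hv
  | insert _ _ hnotmem ih =>
    rename_i a s
    rw [Finset.prod_insert hnotmem, Finset.sum_insert hnotmem, hv.2.1,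
      h a (Finset.mem_insert_self a s), ih (fun i hi => h i (Finset.mem_insert_of_mem hi)),
      ← WithTop.coe_add]

lemma v_sum_nonneg (hv : IsExtVal q v) {ι : Type*} (s : Finset ι) (f : ι → K)
    (h : ∀ i ∈ s, (0 : WithTop ℚ) ≤ v (f i)) : (0 : WithTop ℚ) ≤ v (∑ i ∈ s, f i) := by
  classical
  induction s using Finset.induction_on with
  | empty =>
    rw [Finset.sum_empty, (hv.1 0).mpr rfl]
    exact le_top
  | insert _ _ hnotmem ih =>
    rename_i a s
    rw [Finset.sum_insert hnotmem]
    refine le_trans (le_min (h a (Finset.mem_insert_self a s))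
      (ih (fun i hi => h i (Finset.mem_insert_of_mem hi)))) (hv.2.2.1 _ _)

end ExtValAux

namespace ExtValAux

variable {q : ℕ} [Fact q.Prime] {K : Type*} [Field K] [Algebra ℚ_[q] K]
  {v : K → WithTop ℚ}

lemma v_zeta (hv : IsExtVal q v) {ζ : K} (hζ : IsPrimitiveRoot ζ q) :
    v ζ = ((0 : ℚ) : WithTop ℚ) := by
  have hq : q.Prime := Fact.out
  have hζ0 : ζ ≠ 0 := hζ.ne_zero hq.ne_zero
  obtain ⟨c, hc⟩ := exq hv hζ0
  have h1 := v_pow hv hc q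
  rw [hζ.pow_eq_one, v_one hv] at h1
  have h2 : (0 : ℚ) = (q : ℚ) * c := by exact_mod_cast h1
  have hq0 : (q : ℚ) ≠ 0 := Nat.cast_ne_zero.mpr hq.ne_zero
  have : c = 0 := by
    rcases mul_eq_zero.mp h2.symm with h | h
    · exact absurd h hq0
    · exact h
  rw [hc, this]

lemma v_pow_sub_one (hv : IsExtVal q v) {ζ : K} (hζ : IsPrimitiveRoot ζ q)
    {n : ℕ} (hn0 : 0 < n) (hnq : n < q) : v (ζ ^ n - 1) = v (ζ - 1) := by
  have hq : q.Prime := Fact.out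
  have hζ0 : ζ ≠ 0 := hζ.ne_zero hq.ne_zero
  have hvζ := v_zeta hv hζ
  have hsum : ∀ (x : K), x ≠ 0 → v x = ((0:ℚ) : WithTop ℚ) →
      ∀ m : ℕ, (0 : WithTop ℚ) ≤ v (∑ t ∈ Finset.range m, x ^ t) := by
    intro x hx hvx m
    refine v_sum_nonneg hv _ _ fun i _ => ?_
    rw [v_pow hv hvx i]
    simp
  have h1 : v (ζ - 1) ≤ v (ζ ^ n - 1) := by
    have hgs := geom_sum_mul ζ n
    calc v (ζ - 1) = 0 + v (ζ - 1) := (zero_add _).symm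
      _ ≤ v (∑ t ∈ Finset.range n, ζ ^ t) + v (ζ - 1) :=
          add_le_add_left (hsum ζ hζ0 hvζ n) _
      _ = v ((∑ t ∈ Finset.range n, ζ ^ t) * (ζ - 1)) := (hv.2.1 _ _).symm
      _ = v (ζ ^ n - 1) := by rw [hgs]
  have hcop : Nat.Coprime n q :=
    ((Nat.Prime.coprime_iff_not_dvd hq).mpr (Nat.not_dvd_of_pos_of_lt hn0 hnq)).symm
  obtain ⟨m, -, hm⟩ := Nat.exists_mul_mod_eq_one_of_coprime hcop hq.one_lt
  have hpow : (ζ ^ n) ^ m = ζ := by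
    rw [← pow_mul]
    conv_rhs => rw [← pow_one ζ, ← hm]
    conv_lhs => rw [← Nat.div_add_mod (n * m) q]
    rw [pow_add, pow_mul, hζ.pow_eq_one, one_pow, one_mul]
  have h2 : v (ζ ^ n - 1) ≤ v (ζ - 1) := by
    have hgs := geom_sum_mul (ζ ^ n) m
    rw [hpow] at hgs
    have hvζn : v (ζ ^ n) = ((0:ℚ) : WithTop ℚ) := by simpa using v_pow hv hvζ n
    calc v (ζ ^ n - 1) = 0 + v (ζ ^ n - 1) := (zero_add _).symm
      _ ≤ v (∑ t ∈ Finset.range m, (ζ ^ n) ^ t) + v (ζ ^ n - 1) :=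
          add_le_add_left (hsum (ζ ^ n) (pow_ne_zero n hζ0) hvζn m) _
      _ = v ((∑ t ∈ Finset.range m, (ζ ^ n) ^ t) * (ζ ^ n - 1)) := (hv.2.1 _ _).symm
      _ = v (ζ - 1) := by rw [hgs]
  exact le_antisymm h2 h1

lemma v_zeta_sub_one (hv : IsExtVal q v) {ζ : K} (hζ : IsPrimitiveRoot ζ q)
    (hvq : v ((q : ℕ) : K) = ((1 : ℚ) : WithTop ℚ)) :
    v (ζ - 1) = ((1 / ((q : ℚ) - 1) : ℚ) : WithTop ℚ) := by
  have hq : q.Prime := Fact.out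
  obtain ⟨n, hn⟩ : ∃ n, q = n + 1 := ⟨q - 1, by have := hq.two_le; omega⟩
  have hn1 : 1 ≤ n := by
    have := hq.two_le; omega
  have hζ1 : ζ - 1 ≠ 0 := sub_ne_zero.mpr (hζ.ne_one hq.one_lt)
  obtain ⟨c, hc⟩ := exq hv hζ1
  have hζ' : IsPrimitiveRoot ζ (n + 1) := hn ▸ hζ
  have hprod := hζ'.prod_pow_sub_one_eq_order
  have hm1 : v ((-1 : K) ^ n) = ((0:ℚ) : WithTop ℚ) := by
    have : v (-1 : K) = ((0:ℚ) : WithTop ℚ) := by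
      rw [show (-1 : K) = -(1:K) by ring, v_neg hv, v_one hv]
    simpa using v_pow hv this n
  have hfac : ∀ k ∈ Finset.range n, v (ζ ^ (k + 1) - 1) = (c : WithTop ℚ) := by
    intro k hk
    rw [Finset.mem_range] at hk
    rw [v_pow_sub_one hv hζ (Nat.succ_pos k) (by omega), hc]
  have hL : v ((-1 : K) ^ n * ∏ k ∈ Finset.range n, (ζ ^ (k + 1) - 1))
      = (((n : ℚ) * c : ℚ) : WithTop ℚ) := by
    rw [hv.2.1, hm1, v_prod hv _ _ (fun _ => c) hfac, ← WithTop.coe_add]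
    congr 1
    rw [Finset.sum_const, Finset.card_range]
    ring
  rw [hprod] at hL
  have hR : ((n : K) + 1) = ((q : ℕ) : K) := by rw [hn]; push_cast; ring
  rw [hR, hvq] at hL
  have h1 : (1 : ℚ) = (n : ℚ) * c := by exact_mod_cast hL
  have hnq : ((q : ℚ) - 1) = (n : ℚ) := by rw [hn]; push_cast; ring
  have hn0' : (0:ℚ) < (n : ℚ) := by exact_mod_cast hn1
  have hn0 : (n : ℚ) ≠ 0 := hn0'.ne'
  rw [hc, hnq]
  congr 1
  field_simp
  linarith

end ExtValAux

open ExtValAux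

/-- Theorem (cluster picture, case `q = r`, `r ∣ Δ`, `r ∣ s`): for all
`0 ≤ j, k ≤ r − 1` with `j ≠ k`, `v_r (γ_k − γ_j) = 1/(r − 1) + v_r(s)/r`. -/
theorem stmt_8 (r : ℕ) [Fact r.Prime] (hr5 : 5 ≤ r)
    {K : Type*} [Field K] [Algebra ℚ_[r] K] [IsAlgClosure ℚ_[r] K]
    (v : K → WithTop ℚ) (hv : IsExtVal r v)
    (ζ : K) (hζ : IsPrimitiveRoot ζ r)
    (z s : ℤ) (hz : z ≠ 0)
    (δ α₀ β₀ : K) (hδ : δ ^ 2 = ((s ^ 2 - 4 * z ^ r : ℤ) : K))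
    (hα : α₀ ^ r = -(((s : K) + δ) / 2)) (hβ : β₀ ^ r = -(((s : K) - δ) / 2))
    (hαβ : α₀ * β₀ = (z : K))
    (γ : ℤ → K) (hγ : ∀ j : ℤ, γ j = ζ ^ j * α₀ + ζ ^ (-j) * β₀)
    (hcond : SatisfiesCondIII r z s)
    (hrΔ : (r : ℤ) ∣ (s ^ 2 - 4 * z ^ r)) (hrs : (r : ℤ) ∣ s) :
    ∀ j k : ℤ, 0 ≤ j → j < (r : ℤ) → 0 ≤ k → k < (r : ℤ) → j ≠ k →
      v (γ k - γ j)
        = (((1 : ℚ) / ((r : ℚ) - 1) + (padicValInt r s : ℚ) / (r : ℚ) : ℚ) : WithTop ℚ) := by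
  have hrp : r.Prime := Fact.out
  have hrpos : (0:ℚ) < (r:ℚ) := by exact_mod_cast hrp.pos
  haveI hchar : CharZero K := charZero_of_injective_algebraMap (algebraMap ℚ_[r] K).injective
  have hζ0 : ζ ≠ 0 := hζ.ne_zero hrp.ne_zero
  have hvζ := v_zeta hv hζ
  -- valuation of integer casts
  have vInt : ∀ n : ℤ, n ≠ 0 → v ((n : ℤ) : K) = ((padicValInt r n : ℚ) : WithTop ℚ) := by
    intro n hn
    have h1 : ((n : ℤ) : K) = algebraMap ℚ_[r] K ((n : ℤ) : ℚ_[r]) := by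
      rw [map_intCast]
    rw [h1, hv.2.2.2 _ (by exact_mod_cast hn), Padic.valuation_intCast]
    norm_cast
  -- r does not divide 2 or 4
  have h4 : ¬ ((r:ℤ) ∣ 4) := by
    intro h
    have h' : r ∣ 4 := by exact_mod_cast h
    have := Nat.le_of_dvd (by norm_num) h'
    omega
  have h2 : ¬ ((r:ℤ) ∣ 2) := by
    intro h
    have h' : r ∣ 2 := by exact_mod_cast h
    have := Nat.le_of_dvd (by norm_num) h'
    omega
  -- r divides z
  have hrPrime : Prime (r:ℤ) := Nat.prime_iff_prime_int.mp hrp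
  have hrz : (r:ℤ) ∣ z := by
    have h1 : (r:ℤ) ∣ 4 * z ^ r := by
      have e : (4:ℤ) * z ^ r = s ^ 2 - (s ^ 2 - 4 * z ^ r) := by ring
      rw [e]
      exact dvd_sub (dvd_pow hrs (by norm_num)) hrΔ
    have h2' : (r:ℤ) ∣ z ^ r := (hrPrime.dvd_mul.mp h1).resolve_left h4
    exact hrPrime.dvd_of_dvd_pow h2'
  obtain ⟨hlt, hnd⟩ := hcond r hrp hrs hrz
  have hs0 : s ≠ 0 := by
    intro h
    apply hnd
    rw [h, padicValInt.zero]
    exact dvd_zero r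
  -- padicValInt of powers
  have hpow : ∀ (m : ℤ) (n : ℕ), m ≠ 0 → padicValInt r (m ^ n) = n * padicValInt r m := by
    intro m n hm
    simp only [padicValInt, Int.natAbs_pow]
    exact padicValNat.pow _ n
  rw [hpow s 2 hs0, hpow z r hz] at hlt
  set a := padicValInt r s with ha
  set w := padicValInt r z with hw
  have hlt'' : 2 * (a:ℚ) < (r:ℚ) * (w:ℚ) := by exact_mod_cast hlt
  -- Δ ≠ 0
  have hΔ0 : (s ^ 2 - 4 * z ^ r : ℤ) ≠ 0 := by
    intro h
    have he : (s ^ 2 : ℤ) = 4 * z ^ r := by linarith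
    have h3 : padicValInt r (s ^ 2) = padicValInt r (4 * z ^ r) := by rw [he]
    rw [hpow s 2 hs0, padicValInt.mul (by norm_num) (pow_ne_zero _ hz), hpow z r hz,
      padicValInt.eq_zero_of_not_dvd h4] at h3
    rw [← ha, ← hw] at h3
    omega
  -- basic values
  have vS : v ((s : K)) = ((a : ℚ) : WithTop ℚ) := vInt s hs0
  have vZ : v ((z : K)) = ((w : ℚ) : WithTop ℚ) := vInt z hz
  have v4 : v ((4 : K)) = ((0 : ℚ) : WithTop ℚ) := by
    have e : ((4:ℤ) : K) = (4 : K) := by norm_num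
    rw [← e, vInt 4 (by norm_num), padicValInt.eq_zero_of_not_dvd h4]
    norm_num
  have v2 : v ((2 : K)) = ((0 : ℚ) : WithTop ℚ) := by
    have e : ((2:ℤ) : K) = (2 : K) := by norm_num
    rw [← e, vInt 2 (by norm_num), padicValInt.eq_zero_of_not_dvd h2]
    norm_num
  have hcast : ((s ^ 2 - 4 * z ^ r : ℤ) : K) = (s : K) ^ 2 - 4 * (z : K) ^ r := by
    push_cast; ring
  have hvb : v (-(4 * (z : K) ^ r)) = (((r:ℚ) * (w:ℚ) : ℚ) : WithTop ℚ) := by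
    rw [v_neg hv, hv.2.1, v4, v_pow hv vZ r, ← WithTop.coe_add]
    norm_num
  have hΔK : v ((s : K) ^ 2 - 4 * (z : K) ^ r) = ((2 * (a:ℚ) : ℚ) : WithTop ℚ) := by
    have e1 : (s:K) ^ 2 - 4 * (z:K) ^ r = (s:K) ^ 2 + (-(4 * (z:K) ^ r)) := by ring
    have hva : v ((s:K) ^ 2) = ((2 * (a:ℚ) : ℚ) : WithTop ℚ) := by
      have := v_pow hv vS 2
      rw [this]; norm_num
    rw [e1, v_add_eq hv hva hvb (by linarith)]
  -- value of δ
  have hδne : δ ≠ 0 := by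
    intro h
    apply hΔ0
    have : ((s ^ 2 - 4 * z ^ r : ℤ) : K) = 0 := by rw [← hδ, h]; ring
    exact_mod_cast this
  obtain ⟨cδ, hcδ⟩ := exq hv hδne
  have hvδ : v δ = ((a:ℚ) : WithTop ℚ) := by
    have h1 := v_pow hv hcδ 2
    rw [hδ, hcast, hΔK] at h1
    have h2' : 2 * (a:ℚ) = 2 * cδ := by exact_mod_cast h1
    have : cδ = (a:ℚ) := by linarith
    rw [hcδ, this]
  -- α₀, β₀ nonzero
  have hα0 : α₀ ≠ 0 := by
    intro h
    apply hz
    have : ((z:ℤ) : K) = 0 := by rw [← hαβ, h]; ring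
    exact_mod_cast this
  have hβ0 : β₀ ≠ 0 := by
    intro h
    apply hz
    have : ((z:ℤ) : K) = 0 := by rw [← hαβ, h]; ring
    exact_mod_cast this
  have h2K : (2:K) ≠ 0 := two_ne_zero
  have heq1 : (s : K) + δ = (-2) * α₀ ^ r := by
    field_simp at hα
    linear_combination hα
  have heq2 : (s : K) - δ = (-2) * β₀ ^ r := by
    field_simp at hβ
    linear_combination hβ
  have hsδp : (s : K) + δ ≠ 0 := by
    rw [heq1]
    exact mul_ne_zero (by norm_num) (pow_ne_zero _ hα0)
  have hsδm : (s : K) - δ ≠ 0 := by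
    rw [heq2]
    exact mul_ne_zero (by norm_num) (pow_ne_zero _ hβ0)
  obtain ⟨cp, hcp⟩ := exq hv hsδp
  obtain ⟨cq, hcq⟩ := exq hv hsδm
  have hvm2 : v ((-2 : K)) = ((0:ℚ) : WithTop ℚ) := by
    rw [show ((-2:K)) = -(2:K) by ring, v_neg hv, v2]
  obtain ⟨cα, hcα⟩ := exq hv hα0
  obtain ⟨cβ, hcβ⟩ := exq hv hβ0
  have hcpα : cp = (r:ℚ) * cα := by
    have h1 : v ((s:K) + δ) = v ((-2:K) * α₀ ^ r) := by rw [heq1]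
    rw [hcp, hv.2.1, hvm2, v_pow hv hcα r, ← WithTop.coe_add] at h1
    have := h1
    exact_mod_cast (by exact_mod_cast h1 : cp = 0 + (r:ℚ) * cα).trans (zero_add _)
  have hcqβ : cq = (r:ℚ) * cβ := by
    have h1 : v ((s:K) - δ) = v ((-2:K) * β₀ ^ r) := by rw [heq2]
    rw [hcq, hv.2.1, hvm2, v_pow hv hcβ r, ← WithTop.coe_add] at h1
    exact_mod_cast (by exact_mod_cast h1 : cq = 0 + (r:ℚ) * cβ).trans (zero_add _)
  -- cp ≥ a, cq ≥ a
  have hcpge : (a:ℚ) ≤ cp := by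
    have hm := hv.2.2.1 (s:K) δ
    rw [vS, hvδ, min_self, hcp] at hm
    exact_mod_cast hm
  have hcqge : (a:ℚ) ≤ cq := by
    have hm := hv.2.2.1 (s:K) (-δ)
    rw [vS, v_neg hv, hvδ, min_self, ← sub_eq_add_neg, hcq] at hm
    exact_mod_cast hm
  -- cp + cq = r * w
  have hsum : cp + cq = (r:ℚ) * (w:ℚ) := by
    have e : ((s:K) + δ) * ((s:K) - δ) = 4 * (z:K) ^ r := by
      linear_combination - hδ - hcast
    have h1 : v (((s:K) + δ) * ((s:K) - δ)) = (((r:ℚ) * (w:ℚ) : ℚ) : WithTop ℚ) := by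
      rw [e, hv.2.1, v4, v_pow hv vZ r, ← WithTop.coe_add]
      norm_num
    rw [hv.2.1, hcp, hcq, ← WithTop.coe_add] at h1
    exact_mod_cast h1
  -- one of cp, cq equals a
  have hcase : cp = (a:ℚ) ∨ cq = (a:ℚ) := by
    by_contra hcon
    push_neg at hcon
    have hcpgt : (a:ℚ) < cp := lt_of_le_of_ne hcpge (Ne.symm hcon.1)
    have hcqgt : (a:ℚ) < cq := lt_of_le_of_ne hcqge (Ne.symm hcon.2)
    have h2s : (2:K) * (s:K) = ((s:K) + δ) + ((s:K) - δ) := by ring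
    have hv2s : v ((2:K) * (s:K)) = ((a:ℚ) : WithTop ℚ) := by
      rw [hv.2.1, v2, vS, ← WithTop.coe_add]
      norm_num
    have hm := hv.2.2.1 ((s:K) + δ) ((s:K) - δ)
    rw [← h2s, hv2s, hcp, hcq] at hm
    have : min cp cq ≤ (a:ℚ) := by exact_mod_cast hm
    rcases le_total cp cq with h | h
    · rw [min_eq_left h] at this; linarith
    · rw [min_eq_right h] at this; linarith
  -- the key valuation
  have key : ∀ m : ℤ, v (α₀ - ζ ^ m * β₀) = (((a:ℚ) / (r:ℚ) : ℚ) : WithTop ℚ) := by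
    intro m
    have hζm : ζ ^ m * β₀ ≠ 0 := mul_ne_zero (zpow_ne_zero m hζ0) hβ0
    have hvt : v (-(ζ ^ m * β₀)) = (cβ : WithTop ℚ) := by
      rw [v_neg hv, hv.2.1, v_zpow_zero hv hζ0 hvζ m, hcβ, ← WithTop.coe_add]
      norm_num
    have he : α₀ - ζ ^ m * β₀ = α₀ + (-(ζ ^ m * β₀)) := by ring
    rcases hcase with h | h
    · have hcα' : cα = (a:ℚ) / (r:ℚ) := by
        field_simp
        linarith [hcpα, h]
      have hltαβ : cα < cβ := by
        have h1 : (r:ℚ) * cα < (r:ℚ) * cβ := by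
          rw [← hcpα, ← hcqβ]
          linarith
        exact (mul_lt_mul_iff_right₀ hrpos).mp h1
      rw [he, v_add_eq hv hcα hvt hltαβ, hcα']
    · have hcβ' : cβ = (a:ℚ) / (r:ℚ) := by
        field_simp
        linarith [hcqβ, h]
      have hltβα : cβ < cα := by
        have h1 : (r:ℚ) * cβ < (r:ℚ) * cα := by
          rw [← hcpα, ← hcqβ]
          linarith
        exact (mul_lt_mul_iff_right₀ hrpos).mp h1
      have he' : α₀ - ζ ^ m * β₀ = (-(ζ ^ m * β₀)) + α₀ := by ring
      rw [he', v_add_eq hv hvt hcα hltβα, hcβ']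
  -- value of ζ - 1
  have hvq1 : v (((r:ℕ) : K)) = ((1:ℚ) : WithTop ℚ) := by
    have e : (((r:ℕ):ℤ) : K) = ((r:ℕ) : K) := by push_cast; ring
    rw [← e, vInt (r:ℤ) (by exact_mod_cast hrp.ne_zero), padicValInt.self hrp.one_lt]
    norm_num
  have hζ1v : v (ζ - 1) = ((1 / ((r:ℚ) - 1) : ℚ) : WithTop ℚ) := v_zeta_sub_one hv hζ hvq1
  -- main computation
  intro j k hj hjr hk hkr hjk
  have e1 : ζ ^ (k:ℤ) * ζ ^ (-j - k) = ζ ^ (-j) := by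
    rw [← zpow_add₀ hζ0]; congr 1; ring
  have e2 : ζ ^ (j:ℤ) * ζ ^ (-j - k) = ζ ^ (-k) := by
    rw [← zpow_add₀ hζ0]; congr 1; ring
  have hfac : γ k - γ j = (ζ ^ k - ζ ^ j) * (α₀ - ζ ^ (-j - k) * β₀) := by
    rw [hγ k, hγ j]
    linear_combination β₀ * e1 - β₀ * e2
  have eadd : (j:ℤ) + (k - j) = k := by ring
  have e3 : ζ ^ (k:ℤ) - ζ ^ j = ζ ^ j * (ζ ^ (k - j) - 1) := by
    rw [mul_sub, mul_one, ← zpow_add₀ hζ0, eadd]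
  have hmne : ¬ ((r:ℤ) ∣ (k - j)) := by
    intro hdvd
    have hne : k - j ≠ 0 := sub_ne_zero.mpr (Ne.symm hjk)
    have habs : |k - j| < (r:ℤ) := abs_lt.mpr ⟨by omega, by omega⟩
    exact hne (Int.eq_zero_of_abs_lt_dvd hdvd habs)
  have hrZ0 : (r:ℤ) ≠ 0 := by exact_mod_cast hrp.ne_zero
  have hmodnn : (0:ℤ) ≤ (k - j) % (r:ℤ) := Int.emod_nonneg _ hrZ0
  have htn : (((k - j) % (r:ℤ)).toNat : ℤ) = (k - j) % (r:ℤ) := Int.toNat_of_nonneg hmodnn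
  have hmod : ζ ^ (k - j) = ζ ^ (((k - j) % (r:ℤ)).toNat) := by
    have hdz : ζ ^ ((k - j) - (k - j) % (r:ℤ)) = 1 := by
      rw [hζ.zpow_eq_one_iff_dvd]
      exact ⟨(k - j) / r, by rw [Int.emod_def]; ring⟩
    have h1 : ζ ^ (k - j) = ζ ^ ((k - j) % (r:ℤ)) * ζ ^ ((k - j) - (k - j) % (r:ℤ)) := by
      rw [← zpow_add₀ hζ0]; congr 1; ring
    rw [h1, hdz, mul_one, ← zpow_natCast ζ ((k - j) % (r:ℤ)).toNat, htn]
  have hn0 : 0 < ((k - j) % (r:ℤ)).toNat := by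
    rcases Nat.eq_zero_or_pos ((k - j) % (r:ℤ)).toNat with h | h
    · exfalso
      apply hmne
      apply Int.dvd_of_emod_eq_zero
      omega
    · exact h
  have hnr : ((k - j) % (r:ℤ)).toNat < r := by
    have := Int.emod_lt_of_pos (k - j) (by exact_mod_cast hrp.pos : (0:ℤ) < (r:ℤ))
    omega
  rw [hfac, hv.2.1, e3, hv.2.1, v_zpow_zero hv hζ0 hvζ j, hmod,
    v_pow_sub_one hv hζ hn0 hnr, hζ1v, key (-j - k)]
  rw [← WithTop.coe_add, ← WithTop.coe_add]
  congr 1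
  ring
end

section
/- Suppose q = r, r ∤ s, and v_r(Δ) ≥ 3. Then α₀ and β₀ may be chosen (i.e., there exist elements α₀, β₀ of the algebraic closure with α₀β₀ = z and α₀^r + β₀^r = −s, with v_r(α₀ − β₀) > 1/(r−1)) such that, setting γ_j = ζ^j α₀ + ζ^{−j} β₀: v_r(γ_0 − γ_j) = 2/(r−1) for all 1 ≤ j ≤ r−1; v_r(γ_k − γ_j) = 2/(r−1) for all 1 ≤ j < k ≤ r−1 with j + k ≢ 0 (mod r); and v_r(γ_k − γ_j) = 1/(r−1) + v_r(Δ)/2 − 1 for all 1 ≤ j < k ≤ r−1 with j + k ≡ 0 (mod r). -/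
open Polynomial

section EV
variable {q : ℕ} [Fact q.Prime] {K : Type*} [Field K] [Algebra ℚ_[q] K]
  {v : K → WithTop ℚ}

lemma EV.exists_rat (hv : IsExtVal q v) {x : K} (hx : x ≠ 0) :
    ∃ a : ℚ, v x = (a : WithTop ℚ) := by
  rcases Option.ne_none_iff_exists'.mp (fun h => hx ((hv.1 x).mp h)) with ⟨a, ha⟩
  exact ⟨a, ha⟩

lemma EV.one (hv : IsExtVal q v) : v 1 = 0 := by
  obtain ⟨a, ha⟩ := EV.exists_rat hv (one_ne_zero (α := K))
  have h := hv.2.1 1 1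
  rw [mul_one, ha, ← WithTop.coe_add] at h
  have h2 : a = a + a := WithTop.coe_inj.mp h
  have h3 : a = 0 := by linarith
  rw [ha, h3]; rfl

lemma EV.neg (hv : IsExtVal q v) (x : K) : v (-x) = v x := by
  obtain ⟨a, ha⟩ := EV.exists_rat hv (neg_ne_zero.mpr (one_ne_zero (α := K)))
  have h1 : v ((-1 : K) * (-1 : K)) = v (-1 : K) + v (-1 : K) := hv.2.1 _ _
  rw [neg_mul_neg, one_mul, EV.one hv, ha, ← WithTop.coe_add] at h1
  have ha0 : a = 0 := by
    have h2 : ((a + a : ℚ) : WithTop ℚ) = ((0 : ℚ) : WithTop ℚ) := by exact_mod_cast h1.symm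
    have h3 := WithTop.coe_inj.mp h2
    linarith
  have h3 : v (-x) = v (-1 : K) + v x := by rw [← hv.2.1, neg_one_mul]
  rw [h3, ha, ha0]
  simp

lemma EV.min_eq (hv : IsExtVal q v) {x y : K} (h : v x < v y) : v (x + y) = v x := by
  refine le_antisymm ?_ ?_
  · by_contra hlt
    push_neg at hlt
    have h2 : x = x + y + -y := by ring
    have h3 : min (v (x + y)) (v (-y)) ≤ v (x + y + -y) := hv.2.2.1 _ _
    rw [← h2, EV.neg hv] at h3
    exact absurd h3 (not_le.mpr (lt_min hlt h))
  · have h4 := hv.2.2.1 x y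
    rwa [min_eq_left h.le] at h4

lemma EV.prod (hv : IsExtVal q v) {ι : Type*} (t : Finset ι) (f : ι → K) :
    v (∏ i ∈ t, f i) = ∑ i ∈ t, v (f i) := by
  classical
  induction t using Finset.induction_on with
  | empty => simpa using EV.one hv
  | insert _ _ hnotmem ih =>
      rw [Finset.prod_insert hnotmem, Finset.sum_insert hnotmem, hv.2.1, ih]

lemma EV.sum_nonneg (hv : IsExtVal q v) {ι : Type*} (t : Finset ι) (f : ι → K)
    (h : ∀ i ∈ t, 0 ≤ v (f i)) : 0 ≤ v (∑ i ∈ t, f i) := by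
  classical
  induction t using Finset.induction_on with
  | empty =>
      simp only [Finset.sum_empty]
      rw [(hv.1 0).mpr rfl]
      exact le_top
  | insert _ _ hnotmem ih =>
      rename_i a t'
      rw [Finset.sum_insert hnotmem]
      refine le_trans ?_ (hv.2.2.1 _ _)
      exact le_min (h a (Finset.mem_insert_self a t'))
        (ih fun i hi => h i (Finset.mem_insert_of_mem hi))

lemma EV.int (hv : IsExtVal q v) {n : ℤ} (hn : n ≠ 0) :
    v ((n : K)) = ((padicValInt q n : ℚ) : WithTop ℚ) := by
  have h1 : ((n : K)) = algebraMap ℚ_[q] K ((n : ℚ_[q])) := by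
    rw [map_intCast]
  rw [h1, hv.2.2.2 _ (by exact_mod_cast hn), Padic.valuation_intCast]
  norm_cast

lemma EV.pow (hv : IsExtVal q v) {x : K} {a : ℚ} (n : ℕ) (ha : v x = (a : WithTop ℚ)) :
    v (x ^ n) = ((n * a : ℚ) : WithTop ℚ) := by
  induction n with
  | zero => simpa using EV.one hv
  | succ k ih =>
      rw [pow_succ, hv.2.1, ih, ha, ← WithTop.coe_add]
      norm_cast
      push_cast
      ring

end EV

section Cyc
variable {K : Type*} [Field K] {r : ℕ} {ζ : K}

lemma Cyc.nthRF [DecidableEq K] (hr : 0 < r) (hζ : IsPrimitiveRoot ζ r) :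
    nthRootsFinset r (1 : K) = (Finset.range r).image (ζ ^ ·) := by
  symm
  apply Finset.eq_of_subset_of_card_le
  · intro w hw
    simp only [Finset.mem_image, Finset.mem_range] at hw
    obtain ⟨i, _, rfl⟩ := hw
    rw [Polynomial.mem_nthRootsFinset hr, ← pow_mul, mul_comm, pow_mul, hζ.pow_eq_one, one_pow]
  · rw [hζ.card_nthRootsFinset, Finset.card_image_of_injOn, Finset.card_range]
    intro i hi j hj hij
    exact hζ.pow_inj (Finset.mem_range.mp hi) (Finset.mem_range.mp hj) hij

lemma Cyc.prod_eq [DecidableEq K] (hr : 0 < r) (hζ : IsPrimitiveRoot ζ r) (x y : K) :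
    x ^ r - y ^ r = ∏ i ∈ Finset.range r, (x - ζ ^ i * y) := by
  rw [hζ.pow_sub_pow_eq_prod_sub_mul x y hr, Cyc.nthRF hr hζ,
    Finset.prod_image]
  intro i hi j hj hij
  exact hζ.pow_inj (Finset.mem_range.mp hi) (Finset.mem_range.mp hj) hij

lemma Cyc.prod_one_sub [DecidableEq K] (hr : 1 < r) (hζ : IsPrimitiveRoot ζ r) :
    ∏ i ∈ Finset.Ico 1 r, ((1 : K) - ζ ^ i) = (r : K) := by
  have h0 : (0:ℕ) < r := by omega
  have key : ∀ x : K[X], True := fun _ => trivial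
  -- polynomial identity
  have hP : (X : K[X]) ^ r - 1 = ∏ i ∈ Finset.range r, (X - C (ζ ^ i)) := by
    rw [X_pow_sub_one_eq_prod h0 hζ, Cyc.nthRF h0 hζ, Finset.prod_image]
    intro i hi j hj hij
    exact hζ.pow_inj (Finset.mem_range.mp hi) (Finset.mem_range.mp hj) hij
  have hsplit : (Finset.range r) = insert 0 (Finset.Ico 1 r) := by
    ext i; simp [Finset.mem_range, Finset.mem_Ico]; omega
  rw [hsplit, Finset.prod_insert (by simp)] at hP
  simp only [pow_zero, map_one] at hP
  have hgeom : (∑ i ∈ Finset.range r, (X:K[X]) ^ i) * (X - 1) = X ^ r - 1 := geom_sum_mul _ _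
  have hcancel : (∑ i ∈ Finset.range r, (X:K[X]) ^ i) =
      ∏ i ∈ Finset.Ico 1 r, (X - C (ζ ^ i)) := by
    have hXne : (X : K[X]) - 1 ≠ 0 := by
      intro h
      have := Polynomial.X_sub_C_ne_zero (1 : K)
      simp only [map_one] at this
      exact this h
    apply mul_right_cancel₀ hXne
    rw [hgeom, hP]
    ring
  have := congrArg (Polynomial.eval (1:K)) hcancel
  simp only [Polynomial.eval_finset_sum, Polynomial.eval_pow, Polynomial.eval_one,
    Polynomial.eval_prod, Polynomial.eval_sub, Polynomial.eval_X, Polynomial.eval_C,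
    one_pow, Finset.sum_const, Finset.card_range, nsmul_eq_mul, mul_one] at this
  exact this.symm

lemma Cyc.zpow_red (hr : 0 < r) (hζ : IsPrimitiveRoot ζ r) (t : ℤ) :
    ζ ^ t = ζ ^ ((t % (r : ℤ)).toNat) := by
  have hζ0 : ζ ≠ 0 := hζ.ne_zero hr.ne'
  have h1 : t = (r : ℤ) * (t / r) + t % r := (Int.mul_ediv_add_emod t r).symm
  have h2 : (0:ℤ) ≤ t % r := Int.emod_nonneg t (by exact_mod_cast hr.ne')
  calc ζ ^ t = ζ ^ ((r : ℤ) * (t / r)) * ζ ^ (t % (r:ℤ)) := by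
        rw [← zpow_add₀ hζ0, ← h1]
    _ = ζ ^ ((t % (r : ℤ)).toNat) := by
        rw [zpow_mul, zpow_natCast, hζ.pow_eq_one, one_zpow, one_mul,
          ← zpow_natCast, Int.toNat_of_nonneg h2]

lemma Cyc.zpow_eq_of_mod (hr : 0 < r) (hζ : IsPrimitiveRoot ζ r) {t u : ℤ}
    (h : (r : ℤ) ∣ (t - u)) : ζ ^ t = ζ ^ u := by
  have hζ0 : ζ ≠ 0 := hζ.ne_zero hr.ne'
  obtain ⟨k, hk⟩ := h
  have : t = u + r * k := by omega
  rw [this, zpow_add₀ hζ0, zpow_mul, zpow_natCast, hζ.pow_eq_one, one_zpow, mul_one]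

end Cyc

section VC
variable {q : ℕ} [Fact q.Prime] {K : Type*} [Field K] [Algebra ℚ_[q] K]
  {v : K → WithTop ℚ} {ζ : K}

lemma VC.nsmul_coe (n : ℕ) (a : ℚ) : n • ((a : WithTop ℚ)) = ((n • a : ℚ) : WithTop ℚ) := by
  induction n with
  | zero => simp
  | succ k ih => rw [succ_nsmul, succ_nsmul, ih, ← WithTop.coe_add]

lemma VC.zeta_zero (hv : IsExtVal q v) (hζ : IsPrimitiveRoot ζ q) : v ζ = 0 := by
  have hq : 0 < q := Fact.out (p := q.Prime) |>.pos
  obtain ⟨a, ha⟩ := EV.exists_rat hv (hζ.ne_zero hq.ne')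
  have h1 : v (ζ ^ q) = ((q * a : ℚ) : WithTop ℚ) := EV.pow hv q ha
  rw [hζ.pow_eq_one, EV.one hv] at h1
  have h2 : (0 : ℚ) = q * a := by exact_mod_cast h1
  have h3 : a = 0 := by
    have hq' : (q:ℚ) ≠ 0 := by exact_mod_cast hq.ne'
    field_simp at h2
    exact (mul_eq_zero.mp h2.symm).resolve_left hq'
  rw [ha, h3]; rfl

lemma VC.pow_zero' (hv : IsExtVal q v) (hζ : IsPrimitiveRoot ζ q) (n : ℕ) : v (ζ ^ n) = 0 := by
  rw [EV.pow hv n (VC.zeta_zero hv hζ)]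
  norm_num

lemma VC.zeta_zpow (hv : IsExtVal q v) (hζ : IsPrimitiveRoot ζ q) (t : ℤ) : v (ζ ^ t) = 0 := by
  have hq : 0 < q := Fact.out (p := q.Prime) |>.pos
  rw [Cyc.zpow_red hq hζ t]
  exact VC.pow_zero' hv hζ _

lemma VC.geom_nonneg (hv : IsExtVal q v) (hζ : IsPrimitiveRoot ζ q) (u w : ℕ) :
    0 ≤ v (∑ i ∈ Finset.range w, (ζ ^ u) ^ i) := by
  refine EV.sum_nonneg hv _ _ fun i _ => ?_
  rw [← pow_mul, VC.pow_zero' hv hζ]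

lemma VC.one_sub_pow_eq (hv : IsExtVal q v) (hζ : IsPrimitiveRoot ζ q) {u : ℕ}
    (h0 : 0 < u) (hu : u < q) : v (ζ ^ u - 1) = v (ζ - 1) := by
  have hq : 0 < q := Fact.out (p := q.Prime) |>.pos
  have hqp : q.Prime := Fact.out
  have dirA : v (ζ - 1) ≤ v (ζ ^ u - 1) := by
    have hgm : (∑ i ∈ Finset.range u, ζ ^ i) * (ζ - 1) = ζ ^ u - 1 := geom_sum_mul ζ u
    rw [← hgm, hv.2.1]
    calc v (ζ - 1) = 0 + v (ζ - 1) := (zero_add _).symm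
      _ ≤ _ := by
          refine add_le_add ?_ le_rfl
          have := VC.geom_nonneg hv hζ 1 u
          simpa [pow_one] using this
  have dirB : v (ζ ^ u - 1) ≤ v (ζ - 1) := by
    have hnd : ¬ q ∣ u := Nat.not_dvd_of_pos_of_lt h0 hu
    have hco : Nat.Coprime u q := (Nat.coprime_comm.mp ((hqp.coprime_iff_not_dvd).mpr hnd))
    obtain ⟨w, -, hw⟩ := Nat.exists_mul_mod_eq_one_of_coprime hco hqp.one_lt
    have hdvd : (q : ℤ) ∣ ((u * w : ℕ) : ℤ) - 1 := by
      have h4 := Nat.div_add_mod (u * w) q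
      rw [hw] at h4
      have h5 : ((u * w : ℕ) : ℤ) = (q : ℤ) * ((u * w) / q : ℕ) + 1 := by
        exact_mod_cast h4.symm
      exact ⟨((u * w) / q : ℕ), by linarith⟩
    have hζw : (ζ ^ u) ^ w = ζ := by
      rw [← pow_mul]
      have h1 : ζ ^ ((u * w : ℕ) : ℤ) = ζ ^ (1 : ℤ) := Cyc.zpow_eq_of_mod hq hζ hdvd
      rw [zpow_natCast, zpow_one] at h1
      exact h1
    have hgm : (∑ i ∈ Finset.range w, (ζ ^ u) ^ i) * (ζ ^ u - 1) = ζ - 1 := by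
      rw [geom_sum_mul, hζw]
    rw [← hgm, hv.2.1]
    calc v (ζ ^ u - 1) = 0 + v (ζ ^ u - 1) := (zero_add _).symm
      _ ≤ _ := add_le_add (VC.geom_nonneg hv hζ u w) le_rfl
  exact le_antisymm dirB dirA

lemma VC.v_zeta_sub_one [DecidableEq K] (hv : IsExtVal q v) (hζ : IsPrimitiveRoot ζ q) :
    v (ζ - 1) = (((1 : ℚ) / ((q : ℚ) - 1)) : WithTop ℚ) := by
  have hqp : q.Prime := Fact.out
  have hq1 : 1 < q := hqp.one_lt
  have hq : 0 < q := hqp.pos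
  -- v (q : K) = 1
  have hvq : v ((q : K)) = ((1 : ℚ) : WithTop ℚ) := by
    have h := EV.int (n := (q : ℤ)) hv (by exact_mod_cast hq.ne')
    rw [show ((q : ℤ) : K) = (q : K) by push_cast; ring] at h
    rw [h]
    norm_cast
    rw [show ((q:ℤ)) = ((q:ℕ):ℤ) from rfl, padicValInt, Int.natAbs_natCast, padicValNat.self hq1]
  -- product formula
  have hprod := Cyc.prod_one_sub hq1 hζ (K := K)
  have hsum : v ((q : K)) = ∑ i ∈ Finset.Ico 1 q, v ((1:K) - ζ ^ i) := by
    rw [← hprod, EV.prod hv]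
  obtain ⟨a, ha⟩ := EV.exists_rat hv (sub_ne_zero.mpr (hζ.ne_one hq1))
  have hterm : ∀ i ∈ Finset.Ico 1 q, v ((1:K) - ζ ^ i) = (a : WithTop ℚ) := by
    intro i hi
    rw [Finset.mem_Ico] at hi
    have h1 : (1:K) - ζ ^ i = -(ζ ^ i - 1) := by ring
    rw [h1, EV.neg hv, VC.one_sub_pow_eq hv hζ hi.1 hi.2, ha]
  rw [hvq, Finset.sum_congr rfl hterm, Finset.sum_const, Nat.card_Ico,
    VC.nsmul_coe] at hsum
  have key : (1 : ℚ) = (q - 1 : ℕ) • a := by exact_mod_cast hsum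
  have hcast : ((q - 1 : ℕ) : ℚ) = (q : ℚ) - 1 := by
    have : (1:ℕ) ≤ q := hq1.le
    push_cast [this]
    ring
  rw [nsmul_eq_mul, hcast] at key
  have hne : (q : ℚ) - 1 ≠ 0 := by
    have h5 : (1:ℚ) < q := by exact_mod_cast hq1
    linarith
  have ha' : a = 1 / ((q:ℚ) - 1) := by
    field_simp
    linarith
  rw [ha, ha']

lemma VC.v_zpow_sub [DecidableEq K] (hv : IsExtVal q v) (hζ : IsPrimitiveRoot ζ q)
    {t u : ℤ} (h : ¬ (q : ℤ) ∣ (t - u)) :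
    v (ζ ^ t - ζ ^ u) = (((1 : ℚ) / ((q : ℚ) - 1)) : WithTop ℚ) := by
  have hqp : q.Prime := Fact.out
  have hq : 0 < q := hqp.pos
  have hζ0 : ζ ≠ 0 := hζ.ne_zero hq.ne'
  have h1 : ζ ^ t - ζ ^ u = ζ ^ u * (ζ ^ (t - u) - 1) := by
    rw [mul_sub, mul_one, ← zpow_add₀ hζ0]
    ring_nf
  set n : ℕ := ((t - u) % (q : ℤ)).toNat with hn
  have hmod : ζ ^ (t - u) = ζ ^ n := Cyc.zpow_red hq hζ (t - u)
  have hn_pos : 0 < n := by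
    rcases Nat.eq_zero_or_pos n with h0 | h0
    · exfalso
      apply h
      have h2 : (t - u) % (q : ℤ) = 0 := by
        have h3 : (0:ℤ) ≤ (t - u) % (q : ℤ) := Int.emod_nonneg _ (by exact_mod_cast hq.ne')
        omega
      exact Int.dvd_of_emod_eq_zero h2
    · exact h0
  have hn_lt : n < q := by
    have h3 : (t - u) % (q : ℤ) < (q : ℤ) := Int.emod_lt_of_pos _ (by exact_mod_cast hq)
    omega
  rw [h1, hv.2.1, VC.zeta_zpow hv hζ, hmod, VC.one_sub_pow_eq hv hζ hn_pos hn_lt,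
    VC.v_zeta_sub_one hv hζ, zero_add]

end VC

/-- Theorem (cluster picture, case `q = r`, `r ∤ s`, `v_r(Δ) ≥ 3`): one may choose
`α₀, β₀` with `α₀ β₀ = z`, `α₀^r + β₀^r = −s` and `v_r (α₀ − β₀) > 1/(r−1)` such that,
setting `γ_j = ζ^j α₀ + ζ^{−j} β₀`: `v_r (γ_0 − γ_j) = 2/(r−1)` for `1 ≤ j ≤ r−1`;
`v_r (γ_k − γ_j) = 2/(r−1)` for `1 ≤ j < k ≤ r−1` with `j + k ≢ 0 (mod r)`; and
`v_r (γ_k − γ_j) = 1/(r−1) + v_r(Δ)/2 − 1` for `1 ≤ j < k ≤ r−1` with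
`j + k ≡ 0 (mod r)`. -/
theorem stmt_10 (r : ℕ) [Fact r.Prime] (hr5 : 5 ≤ r)
    {K : Type*} [Field K] [Algebra ℚ_[r] K] [IsAlgClosure ℚ_[r] K]
    (v : K → WithTop ℚ) (hv : IsExtVal r v)
    (ζ : K) (hζ : IsPrimitiveRoot ζ r)
    (z s : ℤ) (hz : z ≠ 0) (hΔ0 : (s ^ 2 - 4 * z ^ r : ℤ) ≠ 0)
    (hrs : ¬ (r : ℤ) ∣ s)
    (h3 : 3 ≤ padicValInt r (s ^ 2 - 4 * z ^ r)) :
    ∃ α₀ β₀ : K, α₀ * β₀ = (z : K) ∧ α₀ ^ r + β₀ ^ r = -(s : K) ∧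
      (((1 : ℚ) / ((r : ℚ) - 1) : ℚ) : WithTop ℚ) < v (α₀ - β₀) ∧
      ∀ γ : ℤ → K, (∀ j : ℤ, γ j = ζ ^ j * α₀ + ζ ^ (-j) * β₀) →
        ((∀ j : ℤ, 1 ≤ j → j ≤ (r : ℤ) - 1 →
            v (γ 0 - γ j) = (((2 : ℚ) / ((r : ℚ) - 1) : ℚ) : WithTop ℚ)) ∧
         (∀ j k : ℤ, 1 ≤ j → j < k → k ≤ (r : ℤ) - 1 → ¬ (r : ℤ) ∣ (j + k) →
            v (γ k - γ j) = (((2 : ℚ) / ((r : ℚ) - 1) : ℚ) : WithTop ℚ)) ∧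
         (∀ j k : ℤ, 1 ≤ j → j < k → k ≤ (r : ℤ) - 1 → (r : ℤ) ∣ (j + k) →
            v (γ k - γ j)
              = (((1 : ℚ) / ((r : ℚ) - 1)
                  + (padicValInt r (s ^ 2 - 4 * z ^ r) : ℚ) / 2 - 1 : ℚ) : WithTop ℚ))) := by
  classical
  have hvm := hv.2.1
  have hrp : r.Prime := Fact.out
  have hr0 : 0 < r := hrp.pos
  have hr1 : 1 < r := hrp.one_lt
  have hζ0 : ζ ≠ 0 := hζ.ne_zero hr0.ne'
  have hchar : CharZero K := charZero_of_injective_algebraMap (algebraMap ℚ_[r] K).injective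
  have hAC : IsAlgClosed K := IsAlgClosure.isAlgClosed ℚ_[r]
  set Δ : ℤ := s ^ 2 - 4 * z ^ r with hΔdef
  set M : ℕ := padicValInt r Δ with hMdef
  have hM3 : 3 ≤ M := h3
  set c : ℚ := 1 / ((r : ℚ) - 1) with hc
  have hrQ : (5 : ℚ) ≤ (r : ℚ) := by exact_mod_cast hr5
  have hrne : (r : ℚ) - 1 ≠ 0 := by linarith
  have hMQ : (3 : ℚ) ≤ (M : ℚ) := by exact_mod_cast hM3
  have hc_le : c ≤ 1 / 4 := by
    rw [hc, div_le_div_iff₀ (by linarith) (by norm_num)]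
    linarith
  -- divisibility facts
  have hrΔ : (r : ℤ) ∣ Δ := by
    have h1 : ((r : ℤ)) ^ 1 ∣ Δ := (padicValInt_dvd_iff 1 Δ).mpr (Or.inr (by omega))
    simpa using h1
  have hrz2 : ¬ (r : ℤ) ∣ z := by
    intro hdvd
    have h1 : (r : ℤ) ∣ 4 * z ^ r := Dvd.dvd.mul_left (hdvd.trans (dvd_pow_self z hr0.ne')) 4
    have h2 : (r : ℤ) ∣ s ^ 2 := by
      have : s ^ 2 = Δ + 4 * z ^ r := by rw [hΔdef]; ring
      rw [this]; exact dvd_add hrΔ h1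
    exact hrs ((Nat.prime_iff_prime_int.mp hrp).dvd_of_dvd_pow h2)
  have hs0 : s ≠ 0 := fun h => hrs (h ▸ dvd_zero _)
  have hrd2 : ¬ (r : ℤ) ∣ 2 := fun h => by
    have := Int.le_of_dvd (by norm_num) h; omega
  -- v of integer constants
  have vz : v ((z : K)) = ((0 : ℚ) : WithTop ℚ) := by
    rw [show ((z : K)) = (((z : ℤ) : K)) by norm_cast, EV.int hv hz,
      padicValInt.eq_zero_of_not_dvd hrz2]
    norm_num
  have vs : v ((s : K)) = ((0 : ℚ) : WithTop ℚ) := by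
    rw [show ((s : K)) = (((s : ℤ) : K)) by norm_cast, EV.int hv hs0,
      padicValInt.eq_zero_of_not_dvd hrs]
    norm_num
  have v2 : v ((2 : K)) = ((0 : ℚ) : WithTop ℚ) := by
    rw [show ((2 : K)) = (((2 : ℤ) : K)) by norm_cast, EV.int hv (by norm_num),
      padicValInt.eq_zero_of_not_dvd hrd2]
    norm_num
  have vΔ : v ((Δ : K)) = ((M : ℚ) : WithTop ℚ) := EV.int hv hΔ0
  have h2K : (2 : K) ≠ 0 := two_ne_zero
  -- square root of Δ
  obtain ⟨d, hd⟩ := IsAlgClosed.exists_pow_nat_eq ((Δ : K)) (n := 2) (by norm_num)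
  have hΔK : ((Δ : K)) ≠ 0 := Int.cast_ne_zero.mpr hΔ0
  have hd0 : d ≠ 0 := fun h => hΔK (by rw [← hd, h]; ring)
  obtain ⟨dv, hdv⟩ := EV.exists_rat hv hd0
  have hdval : dv = (M : ℚ) / 2 := by
    have h1 : v (d ^ 2) = ((2 * dv : ℚ) : WithTop ℚ) := by
      have := EV.pow hv 2 hdv
      rw [this]; norm_num
    rw [hd, vΔ] at h1
    have h2 : (M : ℚ) = 2 * dv := by exact_mod_cast h1
    linarith
  -- A and B
  set A : K := (d - (s : K)) / 2 with hAdef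
  set B : K := (-(s : K) - d) / 2 with hBdef
  have hd2 : d ^ 2 = ((s : K)) ^ 2 - 4 * ((z : K)) ^ r := by
    rw [hd, hΔdef]; push_cast; ring
  have hABprod : A * B = ((z : K)) ^ r := by
    rw [hAdef, hBdef]
    field_simp
    linear_combination (-1 : K) * hd2
  have hABsum : A + B = -(s : K) := by rw [hAdef, hBdef]; ring
  have hABsub : A - B = d := by rw [hAdef, hBdef]; ring
  have hzK : ((z : K)) ≠ 0 := Int.cast_ne_zero.mpr hz
  have hA0 : A ≠ 0 := fun h => (pow_ne_zero r hzK) (by rw [← hABprod, h, zero_mul])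
  have hB0 : B ≠ 0 := fun h => (pow_ne_zero r hzK) (by rw [← hABprod, h, mul_zero])
  -- α and β
  obtain ⟨α, hα⟩ := IsAlgClosed.exists_pow_nat_eq A hr0
  have hα0 : α ≠ 0 := fun h => hA0 (by rw [← hα, h, zero_pow hr0.ne'])
  set β : K := (z : K) / α with hβdef
  have hβ0 : β ≠ 0 := by rw [hβdef]; exact div_ne_zero hzK hα0
  have hαβ : α * β = (z : K) := by rw [hβdef]; field_simp
  have hβr : β ^ r = B := by
    have h1 : B = ((z : K)) ^ r / A := by
      rw [eq_div_iff hA0]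
      linear_combination hABprod
    rw [hβdef, div_pow, hα, h1]
  -- valuations of α, β
  have vnegs : v (-(s : K)) = ((0 : ℚ) : WithTop ℚ) := by rw [EV.neg hv, vs]
  have vds : v (d - (s : K)) = ((0 : ℚ) : WithTop ℚ) := by
    have h1 : v (-(s : K)) < v d := by
      rw [vnegs, hdv, hdval]
      exact WithTop.coe_lt_coe.mpr (by linarith)
    have h2 := EV.min_eq hv h1
    rw [show -(s : K) + d = d - (s : K) by ring] at h2
    rw [h2, vnegs]
  have v2inv : v (((2 : K))⁻¹) = ((0 : ℚ) : WithTop ℚ) := by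
    have h1 : v ((2 : K) * (2 : K)⁻¹) = v (2:K) + v ((2:K))⁻¹ := hvm _ _
    rw [mul_inv_cancel₀ h2K, EV.one hv, v2] at h1
    obtain ⟨b, hb⟩ := EV.exists_rat hv (inv_ne_zero h2K)
    rw [hb, ← WithTop.coe_add] at h1
    have h2 : (0 : ℚ) = 0 + b := by exact_mod_cast h1
    rw [hb]
    norm_num at h2
    rw [h2]
  have vA : v A = ((0 : ℚ) : WithTop ℚ) := by
    rw [hAdef, div_eq_mul_inv, hvm, vds, v2inv, ← WithTop.coe_add]
    norm_num
  have vα : v α = ((0 : ℚ) : WithTop ℚ) := by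
    obtain ⟨a, ha⟩ := EV.exists_rat hv hα0
    have h1 := EV.pow hv r ha
    rw [hα, vA] at h1
    have h2 : (r : ℚ) * a = 0 := by exact_mod_cast h1.symm
    have h3 : a = 0 := by
      rcases mul_eq_zero.mp h2 with h | h
      · exact absurd h (by positivity)
      · exact h
    rw [ha, h3]
  have vβ : v β = ((0 : ℚ) : WithTop ℚ) := by
    have h1 : v ((z : K)) = v α + v β := by rw [← hαβ, hvm]
    rw [vz, vα] at h1
    obtain ⟨b, hb⟩ := EV.exists_rat hv hβ0
    rw [hb, ← WithTop.coe_add] at h1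
    have h2 : (0 : ℚ) = 0 + b := by exact_mod_cast h1
    rw [hb]
    norm_num at h2
    rw [h2]
  -- factorization of d
  have hfac : d = ∏ i ∈ Finset.range r, (α - ζ ^ i * β) := by
    rw [← Cyc.prod_eq hr0 hζ α β, hα, hβr, hABsub]
  have hfacv : (∑ i ∈ Finset.range r, v (α - ζ ^ i * β)) = (((M : ℚ) / 2 : ℚ) : WithTop ℚ) := by
    rw [← EV.prod hv, ← hfac, hdv, hdval]
  have hfne : ∀ i ∈ Finset.range r, α - ζ ^ i * β ≠ 0 := by
    intro i hi h
    exact hd0 (by rw [hfac]; exact Finset.prod_eq_zero hi h)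
  -- valuation of differences between factors
  have hndvd : ∀ m : ℤ, 1 ≤ m → m ≤ (r : ℤ) - 1 → ¬ (r : ℤ) ∣ m := by
    intro m h1 h2 hdvd
    have := Int.le_of_dvd (by omega) hdvd
    omega
  have hnd2 : ∀ mz nz : ℤ, -(r : ℤ) < mz - nz → mz - nz < r → mz ≠ nz →
      ¬ (r : ℤ) ∣ (mz - nz) := by
    intro mz nz h1 h2 h3 hdvd
    rcases (sub_ne_zero.mpr h3).lt_or_gt with hlt | hlt
    · have h4 := (Int.dvd_neg (a := (r:ℤ))).mpr hdvd
      rw [neg_sub] at h4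
      have h5 := Int.le_of_dvd (by omega) h4
      omega
    · have h5 := Int.le_of_dvd (by omega) hdvd
      omega
  have hvdiffN : ∀ i j : ℕ, i < r → j < r → i ≠ j →
      v (ζ ^ j - ζ ^ i) = ((c : ℚ) : WithTop ℚ) := by
    intro i j hi hj hij
    have h1 : ζ ^ j = ζ ^ (j : ℤ) := by rw [zpow_natCast]
    have h2 : ζ ^ i = ζ ^ (i : ℤ) := by rw [zpow_natCast]
    rw [h1, h2, VC.v_zpow_sub hv hζ (t := (j : ℤ)) (u := (i : ℤ))
      (hnd2 _ _ (by omega) (by omega) (by omega))]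
  -- existence of the pivot index
  have hex : ∃ i₀ ∈ Finset.range r, ((c : ℚ) : WithTop ℚ) < v (α - ζ ^ i₀ * β) := by
    by_contra hcon
    push_neg at hcon
    have hle := Finset.sum_le_card_nsmul (Finset.range r)
      (fun i => v (α - ζ ^ i * β)) ((c : ℚ) : WithTop ℚ) hcon
    rw [hfacv, Finset.card_range, VC.nsmul_coe] at hle
    have h1 : (M : ℚ) / 2 ≤ r • c := WithTop.coe_le_coe.mp hle
    rw [nsmul_eq_mul, hc] at h1
    have h2 : (r : ℚ) * (1 / ((r : ℚ) - 1)) < 3 / 2 := by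
      rw [mul_one_div, div_lt_div_iff₀ (by linarith) (by norm_num)]
      linarith
    linarith
  obtain ⟨i₀, hi₀r, hi₀⟩ := hex
  have hi₀lt : i₀ < r := Finset.mem_range.mp hi₀r
  -- other indices have valuation exactly c
  have hoth : ∀ i : ℕ, i < r → i ≠ i₀ → v (α - ζ ^ i * β) = ((c : ℚ) : WithTop ℚ) := by
    intro i hi hii
    have h1 : α - ζ ^ i * β = (ζ ^ i₀ * β - ζ ^ i * β) + (α - ζ ^ i₀ * β) := by ring
    have h2 : v (ζ ^ i₀ * β - ζ ^ i * β) = ((c : ℚ) : WithTop ℚ) := by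
      have h3 : ζ ^ i₀ * β - ζ ^ i * β = (ζ ^ i₀ - ζ ^ i) * β := by ring
      rw [h3, hvm, vβ, hvdiffN i i₀ hi hi₀lt hii]
      rw [← WithTop.coe_add]
      norm_num
    rw [h1, EV.min_eq hv (by rw [h2]; exact hi₀), h2]
  -- pivot valuation
  have hpiv : v (α - ζ ^ i₀ * β) = (((M : ℚ) / 2 - 1 : ℚ) : WithTop ℚ) := by
    have h1 := Finset.add_sum_erase (Finset.range r) (fun i => v (α - ζ ^ i * β)) hi₀r
    rw [hfacv] at h1
    have h2 : ∀ i ∈ (Finset.range r).erase i₀, v (α - ζ ^ i * β) = ((c : ℚ) : WithTop ℚ) := by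
      intro i hi
      obtain ⟨hne, hmem⟩ := Finset.mem_erase.mp hi
      exact hoth i (Finset.mem_range.mp hmem) hne
    rw [Finset.sum_congr rfl h2, Finset.sum_const, Finset.card_erase_of_mem hi₀r,
      Finset.card_range, VC.nsmul_coe] at h1
    have hc1 : ((r - 1 : ℕ) : ℚ) • c = 1 := by
      rw [smul_eq_mul, hc]
      have h4 : ((r - 1 : ℕ) : ℚ) = (r : ℚ) - 1 := by
        have : (1 : ℕ) ≤ r := hr1.le
        push_cast [this]
        ring
      rw [h4]
      field_simp
    obtain ⟨p, hp⟩ := EV.exists_rat hv (hfne i₀ hi₀r)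
    have h1' : v (α - ζ ^ i₀ * β) + (((r - 1 : ℕ) • c : ℚ) : WithTop ℚ) = (((M:ℚ)/2 : ℚ) : WithTop ℚ) := h1
    rw [hp, ← WithTop.coe_add] at h1'
    replace h1 := h1'
    have h3 : p + (r - 1 : ℕ) • c = (M : ℚ) / 2 := by exact_mod_cast h1
    rw [show ((r-1:ℕ) • c) = ((r-1:ℕ):ℚ) • c from by rw [nsmul_eq_mul, smul_eq_mul], hc1] at h3
    rw [hp]
    norm_cast
    linarith
  -- choice of the twist exponent a
  have hodd : r % 2 = 1 := Nat.odd_iff.mp (hrp.odd_of_ne_two (by omega))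
  set t2 : ℕ := (r + 1) / 2 with ht2def
  have ht2 : 2 * t2 = r + 1 := by omega
  set a : ℤ := -(i₀ : ℤ) * t2 with hadef
  have hkey : (r : ℤ) ∣ (2 * a + i₀) := by
    refine ⟨-(i₀ : ℤ), ?_⟩
    have ht2' : (2 : ℤ) * t2 = (r : ℤ) + 1 := by exact_mod_cast ht2
    rw [hadef]
    linear_combination (-(i₀:ℤ)) * ht2'
  set α₀ : K := ζ ^ a * α with hα₀def
  set β₀ : K := ζ ^ (-a) * β with hβ₀def
  have hζa0 : ζ ^ a ≠ 0 := zpow_ne_zero a hζ0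
  have hunit : ζ ^ a * ζ ^ (-a) = 1 := by
    rw [← zpow_add₀ hζ0]
    simp
  -- the key factor identity
  have hfactid : ∀ t : ℤ, α₀ - ζ ^ t * β₀ = ζ ^ a * (α - ζ ^ (t - 2 * a) * β) := by
    intro t
    rw [hα₀def, hβ₀def]
    have h1 : ζ ^ a * ζ ^ (t - 2 * a) = ζ ^ t * ζ ^ (-a) := by
      rw [← zpow_add₀ hζ0, ← zpow_add₀ hζ0]
      congr 1
      ring
    linear_combination β * h1
  have hvfact : ∀ t : ℤ, v (α₀ - ζ ^ t * β₀) = v (α - ζ ^ (t - 2 * a) * β) := by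
    intro t
    rw [hfactid t, hvm, VC.zeta_zpow hv hζ, zero_add]
  -- reduction mod r of the exponent
  have hred : ∀ t : ℤ, ∃ u : ℕ, u < r ∧ ζ ^ (t - 2 * a) = ζ ^ u ∧ ((r : ℤ) ∣ t ↔ u = i₀) := by
    intro t
    have h2 : (0:ℤ) ≤ (t - 2*a) % (r:ℤ) := Int.emod_nonneg _ (by exact_mod_cast hr0.ne')
    have h1 : (t - 2 * a) % (r : ℤ) < r := Int.emod_lt_of_pos _ (by exact_mod_cast hr0)
    have h3 : (r : ℤ) ∣ (t - 2*a) - ((t - 2*a) % (r:ℤ)) := Int.dvd_self_sub_of_emod_eq rfl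
    refine ⟨((t - 2 * a) % (r : ℤ)).toNat, by omega, Cyc.zpow_red hr0 hζ (t - 2 * a), ?_, ?_⟩
    · intro hdvd
      have h4 : (r:ℤ) ∣ ((t - 2*a) % (r:ℤ)) - i₀ := by
        have h5 := dvd_sub (dvd_sub hdvd hkey) h3
        have h6 : t - (2*a + i₀) - ((t - 2*a) - ((t - 2*a) % (r:ℤ)))
            = ((t - 2*a) % (r:ℤ)) - i₀ := by ring
        rwa [h6] at h5
      by_contra hne
      exact hnd2 _ _ (by omega) (by omega) (by omega) h4
    · intro heq
      have h4 : ((t - 2*a) % (r:ℤ)) = (i₀ : ℤ) := by omega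
      have h6 := dvd_add h3 hkey
      rw [h4] at h6
      have h7 : (t - 2*a - (i₀:ℤ)) + (2*a + i₀) = t := by ring
      rwa [h7] at h6
  -- valuations of the twisted factors
  have hμdvd : ∀ t : ℤ, (r:ℤ) ∣ t →
      v (α₀ - ζ ^ t * β₀) = (((M:ℚ)/2 - 1 : ℚ) : WithTop ℚ) := by
    intro t ht
    obtain ⟨u, hu, hze, hiff⟩ := hred t
    rw [hvfact t, hze, hiff.mp ht, hpiv]
  have hμnd : ∀ t : ℤ, ¬ (r:ℤ) ∣ t → v (α₀ - ζ ^ t * β₀) = ((c:ℚ) : WithTop ℚ) := by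
    intro t ht
    obtain ⟨u, hu, hze, hiff⟩ := hred t
    rw [hvfact t, hze, hoth u hu (fun h => ht (hiff.mpr h))]
  -- conclusion
  refine ⟨α₀, β₀, ?_, ?_, ?_, ?_⟩
  · rw [hα₀def, hβ₀def]
    calc ζ ^ a * α * (ζ ^ (-a) * β) = (ζ ^ a * ζ ^ (-a)) * (α * β) := by ring
      _ = (z : K) := by rw [hunit, one_mul, hαβ]
  · have hζar : (ζ ^ a) ^ r = 1 := by
      rw [← zpow_natCast (ζ ^ a) r, ← zpow_mul]
      exact (hζ.zpow_eq_one_iff_dvd (a * r)).mpr ⟨a, by ring⟩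
    have hζnar : (ζ ^ (-a)) ^ r = 1 := by
      rw [← zpow_natCast (ζ ^ (-a)) r, ← zpow_mul]
      exact (hζ.zpow_eq_one_iff_dvd (-a * r)).mpr ⟨-a, by ring⟩
    rw [hα₀def, hβ₀def, mul_pow, mul_pow, hζar, hζnar, one_mul, one_mul, hα, hβr, hABsum]
  · have h1 : α₀ - β₀ = α₀ - ζ ^ (0:ℤ) * β₀ := by rw [zpow_zero, one_mul]
    rw [h1, hμdvd 0 (dvd_zero _)]
    exact WithTop.coe_lt_coe.mpr (by rw [hc] at hc_le ⊢; linarith)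
  · intro γ hγ
    have hexp : ∀ j k : ℤ, γ k - γ j = (ζ ^ k - ζ ^ j) * (α₀ - ζ ^ (-(j+k)) * β₀) := by
      intro j k
      rw [hγ j, hγ k]
      have h1 : ζ ^ k * ζ ^ (-(j+k)) = ζ ^ (-j) := by
        rw [← zpow_add₀ hζ0]; congr 1; ring
      have h2 : ζ ^ j * ζ ^ (-(j+k)) = ζ ^ (-k) := by
        rw [← zpow_add₀ hζ0]; congr 1; ring
      linear_combination β₀ * h1 - β₀ * h2
    have hcc : (c : ℚ) + (c : ℚ) = (2 : ℚ) / ((r:ℚ) - 1) := by rw [hc]; ring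
    refine ⟨?_, ?_, ?_⟩
    · intro j h1 h2
      rw [hexp j 0, hvm,
        VC.v_zpow_sub hv hζ (t := (0:ℤ)) (u := j)
          (by intro hd; rw [zero_sub] at hd; exact hndvd j h1 h2 ((dvd_neg).mp hd)),
        hμnd (-(j+0)) (by
          intro hd
          refine hndvd j h1 h2 ?_
          have h5 := (dvd_neg).mp hd
          simpa using h5),
        ← WithTop.coe_add, hcc]
    · intro j k h1 h2 h3 h4
      rw [hexp j k, hvm,
        VC.v_zpow_sub hv hζ (t := k) (u := j) (hnd2 k j (by omega) (by omega) (by omega)),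
        hμnd (-(j+k)) (fun hd => h4 ((dvd_neg).mp hd)),
        ← WithTop.coe_add, hcc]
    · intro j k h1 h2 h3 h4
      rw [hexp j k, hvm,
        VC.v_zpow_sub hv hζ (t := k) (u := j) (hnd2 k j (by omega) (by omega) (by omega)),
        hμdvd (-(j+k)) ((dvd_neg).mpr h4),
        ← WithTop.coe_add]
      congr 1
      rw [hc]
      ring
end
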